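/- arXiv:2603.07873 — 4 statements merged into one kernel-verified Lean document; each statement's English description precedes it below -/
import Mathlib

section
/- Let f ∈ ℚ(q)[t] be a quantum integer-valued polynomial of t-degree d. Then there exists N(t,q) ∈ ℤ[t,q,q^{−1}] (a polynomial in t with Laurent-polynomial coefficients) of t-degree at most d such that, as formal power series in t with coefficients in ℚ(q), (∏_{i=0}^{d}(1 − t q^i)) · Σ_{n≥0} f([n]_q) t^n = N(t,q). If moreover f([n]_q) ∈ ℤ[q] for all integers n ≥ 0, then N(t,q) ∈ ℤ[t,q]. -/
noncomputable section

/-- The field `ℚ(q)` of rational functions. -/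
abbrev Fq : Type := RatFunc ℚ

/-- The variable `q ∈ ℚ(q)`. -/
def qq : Fq := RatFunc.X

/-- The `q`-integer `[k]_q = (1 - q^k)/(1 - q) ∈ ℚ(q)`, for `k ∈ ℤ`. -/
def qint (k : ℤ) : Fq := (1 - qq ^ k) / (1 - qq)

/-- The canonical inclusion `ℤ[q] → ℚ(q)`. -/
def toRat : Polynomial ℤ →+* Fq :=
  (algebraMap (Polynomial ℚ) Fq).comp (Polynomial.mapRingHom (Int.castRingHom ℚ))

/-- `r ∈ ℚ(q)` lies in the subring `ℤ[q,q^{−1}]` of Laurent polynomials. -/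
def IsIntLaurent (r : Fq) : Prop :=
  ∃ (p : Polynomial ℤ) (k : ℕ), r = qq ^ (-(k : ℤ)) * toRat p

/-- The denominator `∏_{i=0}^{d} (1 − t q^i)` as a formal power series in `t` over `ℚ(q)`. -/
def psDen (d : ℕ) : PowerSeries Fq :=
  ∏ i ∈ Finset.range (d + 1), (1 - PowerSeries.C (R := Fq) (qq ^ i) * PowerSeries.X)

/-- A polynomial `N(t,q) ∈ ℤ[t,q]` (a polynomial in `t` with coefficients in `ℤ[q]`)
viewed as a formal power series in `t` over `ℚ(q)`. -/
def psOfN (N : Polynomial (Polynomial ℤ)) : PowerSeries Fq :=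
  N.eval₂ ((PowerSeries.C (R := Fq)).comp toRat) PowerSeries.X


/-!
Since `[n]_q = (1 - q^n)/(1 - q)` is an affine function of `q^n`, the sequence `f([n]_q)` is
`g(q^n) = ∑_{i ≤ d} bᵢ (q^i)^n` for the polynomial `g(x) = f((1 - x)/(1 - q))` of degree `≤ d`:
a sum of `d + 1` geometric sequences. Multiplying its generating function by `∏_{i ≤ d} (1 - t q^i)`
cancels every geometric series against its own factor and leaves a polynomial `N` of `t`-degree
`≤ d`. The denominator has coefficients in `ℤ[q]`, so each coefficient of `N` is a `ℤ[q]`-linear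
combination of values `f([n]_q)` and lies in `ℤ[q, q⁻¹]` (in `ℤ[q]` under the stronger hypothesis);
a single power of `q` then clears the denominators of all of them.
-/

open Polynomial Finset
open scoped PowerSeries

section CommRing

variable {R : Type*} [CommRing R]

theorem PowerSeries.one_sub_C_mul_X_mul_mk_pow (r : R) :
    (1 - C r * X) * mk (r ^ ·) = 1 := by
  simpa [rescale_mk, rescale_X, mul_comm] using
    congrArg (rescale r) (mk_one_mul_one_sub_eq_one (S := R))

theorem PowerSeries.prod_one_sub_C_mul_X_mul_mk_sum_pow {ι : Type*} [DecidableEq ι]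
    (s : Finset ι) (r b : ι → R) :
    (∏ i ∈ s, (1 - C (r i) * X)) * mk (fun n => ∑ i ∈ s, b i * r i ^ n) =
      ((∑ i ∈ s, Polynomial.C (b i) *
          ∏ j ∈ s.erase i, (1 - Polynomial.C (r j) * Polynomial.X) : R[X]) : R⟦X⟧) := by
  have hmk : mk (fun n => ∑ i ∈ s, b i * r i ^ n) = ∑ i ∈ s, C (b i) * mk (r i ^ ·) := by
    ext n
    simp [map_sum, coeff_C_mul]
  rw [hmk, Finset.mul_sum, ← Polynomial.coeToPowerSeries.ringHom_apply, map_sum]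
  refine Finset.sum_congr rfl fun i hi => ?_
  rw [← Finset.mul_prod_erase s _ hi]
  simp only [map_mul, map_prod, map_sub, map_one, Polynomial.coeToPowerSeries.ringHom_apply,
    Polynomial.coe_C, Polynomial.coe_X]
  linear_combination (C (b i) * ∏ j ∈ s.erase i, (1 - C (r j) * X)) *
    one_sub_C_mul_X_mul_mk_pow (r i)

theorem PowerSeries.coeff_mul_mem_of_forall_coeff_mem (S : Subring R) {φ ψ : R⟦X⟧}
    (hφ : ∀ n, coeff n φ ∈ S) (hψ : ∀ n, coeff n ψ ∈ S) (n : ℕ) : coeff n (φ * ψ) ∈ S := by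
  rw [coeff_mul]
  exact S.sum_mem fun p _ => S.mul_mem (hφ p.1) (hψ p.2)

theorem Polynomial.natDegree_sum_C_mul_prod_erase_le {ι : Type*} [DecidableEq ι]
    (s : Finset ι) (r b : ι → R) :
    (∑ i ∈ s, C (b i) * ∏ j ∈ s.erase i, (1 - C (r j) * X)).natDegree ≤ s.card - 1 := by
  refine natDegree_sum_le_of_forall_le _ _ fun i hi => (natDegree_C_mul_le _ _).trans ?_
  refine (natDegree_prod_le _ _).trans ((sum_le_card_nsmul _ _ 1 fun j _ => ?_).trans ?_)
  · compute_degree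
  · simp [card_erase_of_mem hi]

theorem Polynomial.eval_pow_eq_sum_range {g : R[X]} {d : ℕ} (hg : g.natDegree ≤ d) (u : R)
    (n : ℕ) : g.eval (u ^ n) = ∑ i ∈ range (d + 1), g.coeff i * (u ^ i) ^ n := by
  simp only [eval_eq_sum_range' (Nat.lt_succ_of_le hg), pow_right_comm]

end CommRing

lemma qq_ne_zero : qq ≠ 0 := RatFunc.X_ne_zero

lemma qint_natCast (n : ℕ) : qint n = (C (1 - qq)⁻¹ * (1 - X)).eval (qq ^ n) := by
  simp [qint, div_eq_inv_mul]

theorem exists_psDen_mul_mk_eval_qint_eq_coe (d : ℕ) {f : Fq[X]} (hf : f.natDegree ≤ d) :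
    ∃ P : Fq[X], P.natDegree ≤ d ∧
      psDen d * PowerSeries.mk (fun n => f.eval (qint n)) = (P : Fq⟦X⟧) := by
  set g := f.comp (C (1 - qq)⁻¹ * (1 - X))
  have hg : g.natDegree ≤ d := by
    refine natDegree_comp_le.trans (mul_le_of_le_of_le_one hf ?_)
    compute_degree
  have hval (n : ℕ) : f.eval (qint n) = ∑ i ∈ range (d + 1), g.coeff i * (qq ^ i) ^ n := by
    rw [qint_natCast, ← eval_comp, eval_pow_eq_sum_range hg]
  refine ⟨∑ i ∈ range (d + 1), C (g.coeff i) * ∏ j ∈ (range (d + 1)).erase i, (1 - C (qq ^ j) * X),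
    ?_, ?_⟩
  · simpa using natDegree_sum_C_mul_prod_erase_le (range (d + 1)) (qq ^ ·) g.coeff
  · simp only [psDen, hval]
    exact PowerSeries.prod_one_sub_C_mul_X_mul_mk_sum_pow _ _ _

lemma qq_pow_mem_range (k : ℕ) : qq ^ k ∈ toRat.range :=
  ⟨X ^ k, by simp [toRat, qq]⟩

lemma coeff_psDen_mem_range (d n : ℕ) : PowerSeries.coeff n (psDen d) ∈ toRat.range := by
  have : psDen d = PowerSeries.map toRat
      (∏ i ∈ range (d + 1), (1 - PowerSeries.C (X ^ i) * PowerSeries.X)) := by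
    simp [psDen, map_prod, toRat, qq]
  rw [this, PowerSeries.coeff_map]
  exact toRat.mem_range_self _

lemma coeff_psDen_mul_mk_mem (S : Subring Fq) (hS : toRat.range ≤ S) {a : ℕ → Fq}
    (ha : ∀ n, a n ∈ S) (d n : ℕ) : PowerSeries.coeff n (psDen d * PowerSeries.mk a) ∈ S :=
  PowerSeries.coeff_mul_mem_of_forall_coeff_mem S (fun n => hS (coeff_psDen_mem_range d n))
    (fun n => by simpa using ha n) n

/-- The subring `ℤ[q, q⁻¹]` of `ℚ(q)`. -/
def laurentSubring : Subring Fq where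
  carrier := {r | ∃ k : ℕ, qq ^ k * r ∈ toRat.range}
  mul_mem' := by
    rintro a b ⟨k, hk⟩ ⟨l, hl⟩
    exact ⟨k + l, by rw [pow_add, mul_mul_mul_comm]; exact mul_mem hk hl⟩
  add_mem' := by
    rintro a b ⟨k, hk⟩ ⟨l, hl⟩
    refine ⟨k + l, ?_⟩
    rw [show qq ^ (k + l) * (a + b) = qq ^ l * (qq ^ k * a) + qq ^ k * (qq ^ l * b) by ring]
    exact add_mem (mul_mem (qq_pow_mem_range l) hk) (mul_mem (qq_pow_mem_range k) hl)
  zero_mem' := ⟨0, by simp⟩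
  one_mem' := ⟨0, by simp⟩
  neg_mem' := by
    rintro a ⟨k, hk⟩
    exact ⟨k, by rw [mul_neg]; exact neg_mem hk⟩

lemma IsIntLaurent.mem_laurentSubring {r : Fq} (hr : IsIntLaurent r) : r ∈ laurentSubring := by
  obtain ⟨p, k, rfl⟩ := hr
  refine ⟨k, ?_⟩
  rw [zpow_neg, zpow_natCast, mul_inv_cancel_left₀ (pow_ne_zero k qq_ne_zero)]
  exact toRat.mem_range_self p

lemma range_le_laurentSubring : toRat.range ≤ laurentSubring :=
  fun r hr => ⟨0, by simpa using hr⟩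

lemma pow_mul_mem_range_of_le {r : Fq} {k l : ℕ} (h : qq ^ k * r ∈ toRat.range) (hkl : k ≤ l) :
    qq ^ l * r ∈ toRat.range := by
  rw [← Nat.sub_add_cancel hkl, pow_add, mul_assoc]
  exact mul_mem (qq_pow_mem_range _) h

lemma exists_C_pow_mul_mem_lifts {P : Fq[X]} (hP : ∀ n, P.coeff n ∈ laurentSubring) :
    ∃ k : ℕ, C (qq ^ k) * P ∈ lifts toRat := by
  choose k hk using hP
  refine ⟨P.support.sup k, (lifts_iff_coeff_lifts _).2 fun n => ?_⟩
  rw [coeff_C_mul, ← RingHom.coe_range]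
  by_cases hn : n ∈ P.support
  · exact pow_mul_mem_range_of_le (hk n) (le_sup hn)
  · rw [notMem_support_iff.mp hn, mul_zero]
    exact zero_mem _

lemma psOfN_eq_coe_map (N : Polynomial (Polynomial ℤ)) : psOfN N = (N.map toRat : Fq⟦X⟧) := by
  rw [psOfN, ← eval₂_map, eval₂_C_X_eq_coe]

/-- For a quantum integer-valued `f ∈ ℚ(q)[t]` of `t`-degree `d`, there is
`N(t,q) ∈ ℤ[t,q,q^{−1}]` (encoded as `q^{−k}·N` with `N ∈ ℤ[t,q]`) of `t`-degree at most `d`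
with `(∏_{i=0}^{d}(1−tq^i))·Σ_{n≥0} f([n]_q)t^n = N(t,q)`; and if moreover `f([n]_q) ∈ ℤ[q]`
for all `n ≥ 0`, then one can take `N(t,q) ∈ ℤ[t,q]`. -/
theorem stmt5 (d : ℕ) (f : Polynomial Fq) (hdeg : f.natDegree = d)
    (hqiv : ∀ m : ℤ, IsIntLaurent (f.eval (qint m))) :
    (∃ (N : Polynomial (Polynomial ℤ)) (k : ℕ), N.natDegree ≤ d ∧
      psDen d * PowerSeries.mk (fun m => f.eval (qint m)) =
        PowerSeries.C (R := Fq) (qq ^ (-(k : ℤ))) * psOfN N) ∧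
    ((∀ m : ℕ, ∃ p : Polynomial ℤ, f.eval (qint m) = toRat p) →
      ∃ N : Polynomial (Polynomial ℤ), N.natDegree ≤ d ∧
        psDen d * PowerSeries.mk (fun m => f.eval (qint m)) = psOfN N) := by
  obtain ⟨P, hPdeg, hP⟩ := exists_psDen_mul_mk_eval_qint_eq_coe d hdeg.le
  have coeff_mem (S : Subring Fq) (hS : toRat.range ≤ S) (hf : ∀ m : ℕ, f.eval (qint m) ∈ S)
      (n : ℕ) : P.coeff n ∈ S := by
    rw [← coeff_coe, ← hP]
    exact coeff_psDen_mul_mk_mem S hS hf d n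
  constructor
  · obtain ⟨k, hk⟩ := exists_C_pow_mul_mem_lifts
      (coeff_mem _ range_le_laurentSubring fun m => (hqiv m).mem_laurentSubring)
    obtain ⟨N, hNP, hNdeg⟩ := exists_natDegree_eq_of_mem_lifts hk
    refine ⟨N, k, hNdeg ▸ (natDegree_C_mul_le _ _).trans hPdeg, ?_⟩
    rw [hP, psOfN_eq_coe_map, hNP, Polynomial.coe_mul, coe_C, ← mul_assoc, ← map_mul, zpow_neg,
      zpow_natCast, inv_mul_cancel₀ (pow_ne_zero k qq_ne_zero), map_one, one_mul]
  · intro hint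
    have hlifts : P ∈ lifts toRat := (lifts_iff_coeff_lifts P).2 fun n =>
      coeff_mem _ le_rfl (fun m => (hint m).imp fun _ h => h.symm) n
    obtain ⟨N, hNP, hNdeg⟩ := exists_natDegree_eq_of_mem_lifts hlifts
    exact ⟨N, hNdeg ▸ hPdeg, by rw [hP, psOfN_eq_coe_map, hNP]⟩
end
end

section
/- Let v ∈ L_ℝ ∩ ℤ^n be a primitive cocircuit vector (primitive: αv ∉ ℤ^n for all real 0 < α < 1), and let c ∈ ℝ^d be the unique vector with Aᵀc = v. Then (max_{x∈Z} ⟨c,x⟩) − (min_{x∈Z} ⟨c,x⟩) = m(v), where m(v) is the number of nonzero coordinates of v. Moreover, the sets {x ∈ Z : ⟨c,x⟩ = max_{y∈Z}⟨c,y⟩} and {x ∈ Z : ⟨c,x⟩ = min_{y∈Z}⟨c,y⟩} are facets of Z, i.e., faces of Z whose affine span has dimension d−1. -/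
/-!
Writing `x = A t` with `t ∈ [0,1]ⁿ` gives `⟨c, x⟩ = ⟨v, t⟩`, so the maximum of `⟨c, ·⟩` on `Z`
is `∑ v_j⁺`, attained exactly when `t_j = [v_j > 0]` on the support of `v`. The maximal face
is therefore a translate of the zonotope of the columns `A_j` with `v_j = 0`, and its direction
is their span. Minimality of the support of `v` makes this span the hyperplane `c^⊥`, so the
face is a facet (the minimal face is the maximal face for `-c`).

For the width, adding a column `A_{j₀}` with `v_{j₀} ≠ 0` spans `ℝ^d`, so these columns contain
a basis `B`. Unimodularity makes `B` invertible over `ℤ`, and `cᵀB = v_{j₀} e_{j₀}` shows that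
`v / v_{j₀}` is integral; primitivity forces `|v_{j₀}| = 1`. Hence `v ∈ {0, ±1}ⁿ` and the width
`∑ |v_j|` is the size of the support.
-/

noncomputable section

/-- The zonotope `Z = A · [0,1]^n ⊆ ℝ^d`. -/
def zonotope (d n : ℕ) (A : Matrix (Fin d) (Fin n) ℤ) : Set (Fin d → ℝ) :=
  {x | ∃ t : Fin n → ℝ, (∀ j, t j ∈ Set.Icc (0 : ℝ) 1) ∧ ∀ i, x i = ∑ j, (A i j : ℝ) * t j}

/-- `A` is unimodular: all maximal (`d × d`) minors lie in `{-1,0,1}`. -/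
def Unimodular (d n : ℕ) (A : Matrix (Fin d) (Fin n) ℤ) : Prop :=
  ∀ g : Fin d → Fin n, (A.submatrix id g).det ∈ ({-1, 0, 1} : Set ℤ)

open scoped Classical

open Matrix Module Submodule Set Function

theorem IsGreatest.isExposed_setOf_eq {𝕜 E : Type*} [TopologicalSpace 𝕜] [Semiring 𝕜]
    [PartialOrder 𝕜] [AddCommMonoid E] [TopologicalSpace E] [Module 𝕜 E] {l : StrongDual 𝕜 E}
    {s : Set E} {a : 𝕜} (h : IsGreatest (l '' s) a) : IsExposed 𝕜 s {x ∈ s | l x = a} := by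
  refine fun _ => ⟨l, ?_⟩
  ext x
  refine ⟨fun ⟨hx, hxa⟩ => ⟨hx, fun y hy => hxa ▸ h.2 ⟨y, hy, rfl⟩⟩,
    fun ⟨hx, hmax⟩ => ⟨hx, ?_⟩⟩
  obtain ⟨x0, hx0, rfl⟩ := h.1
  exact le_antisymm (h.2 ⟨x, hx, rfl⟩) (hmax x0 hx0)

theorem IsLeast.isExposed_setOf_eq {𝕜 E : Type*} [TopologicalSpace 𝕜] [Ring 𝕜] [PartialOrder 𝕜]
    [IsOrderedAddMonoid 𝕜] [IsTopologicalAddGroup 𝕜] [AddCommGroup E] [TopologicalSpace E]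
    [Module 𝕜 E] {l : StrongDual 𝕜 E} {s : Set E} {a : 𝕜} (h : IsLeast (l '' s) a) :
    IsExposed 𝕜 s {x ∈ s | l x = a} := by
  have : IsGreatest ((-l) '' s) (-a) := by
    obtain ⟨x0, hx0, rfl⟩ := h.1
    refine ⟨⟨x0, hx0, rfl⟩, ?_⟩
    rintro _ ⟨y, hy, rfl⟩
    exact neg_le_neg (h.2 ⟨y, hy, rfl⟩)
  simpa using this.isExposed_setOf_eq

section Cube

variable {κ : Type*}

theorem mul_le_posPart {a t : ℝ} (ht : t ∈ Icc (0 : ℝ) 1) : a * t ≤ a⁺ := by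
  rcases le_total 0 a with ha | ha
  · rw [posPart_eq_self.mpr ha]; exact mul_le_of_le_one_right ha ht.2
  · rw [posPart_eq_zero.mpr ha]; exact mul_nonpos_of_nonpos_of_nonneg ha ht.1

theorem mul_eq_posPart_iff {a t : ℝ} :
    a * t = a⁺ ↔ (a ≠ 0 → t = if 0 < a then 1 else 0) := by
  rcases lt_trichotomy a 0 with ha | rfl | ha
  · simp [ha.ne, ha.not_gt, posPart_eq_zero.mpr ha.le]
  · simp
  · simp [ha.ne', ha, posPart_eq_self.mpr ha.le]

theorem ite_pos_mem_Icc (w : κ → ℝ) :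
    (fun j => if 0 < w j then 1 else 0 : κ → ℝ) ∈ Icc 0 1 :=
  ⟨fun j => by dsimp only; split <;> norm_num, fun j => by dsimp only; split <;> norm_num⟩

variable [Fintype κ]

theorem dotProduct_le_sum_posPart {w t : κ → ℝ} (ht : t ∈ Icc 0 1) :
    w ⬝ᵥ t ≤ ∑ j, (w j)⁺ :=
  Finset.sum_le_sum fun j _ => mul_le_posPart ⟨ht.1 j, ht.2 j⟩

theorem dotProduct_eq_sum_posPart_iff {w t : κ → ℝ} (ht : t ∈ Icc 0 1) :
    w ⬝ᵥ t = ∑ j, (w j)⁺ ↔ ∀ j, w j ≠ 0 → t j = if 0 < w j then 1 else 0 := by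
  rw [dotProduct, Finset.sum_eq_sum_iff_of_le fun j _ => mul_le_posPart ⟨ht.1 j, ht.2 j⟩]
  simp only [Finset.mem_univ, true_implies, mul_eq_posPart_iff]

end Cube

section Zonotope

variable {κ : Type*} [Fintype κ]

theorem mulVec_mem_span_col {R ι : Type*} [CommSemiring R] (M : Matrix ι κ R) {u : κ → R}
    {J : Set κ} (hu : ∀ j ∉ J, u j = 0) : M *ᵥ u ∈ span R (M.col '' J) := by
  rw [mulVec_eq_sum]
  refine sum_mem fun j _ => ?_
  rw [op_smul_eq_smul]
  by_cases hj : j ∈ J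
  · exact smul_mem _ _ (subset_span (mem_image_of_mem M.col hj))
  · simp [hu j hj]

variable {ι : Type*} [Fintype ι] (M : Matrix ι κ ℝ) (c : ι → ℝ)

theorem isGreatest_dotProduct_image_mulVec_Icc :
    IsGreatest ((c ⬝ᵥ ·) '' ((M *ᵥ ·) '' Icc 0 1)) (∑ j, ((c ᵥ* M) j)⁺) := by
  simp_rw [image_image, dotProduct_mulVec]
  have ht0 := ite_pos_mem_Icc (c ᵥ* M)
  exact ⟨⟨_, ht0, (dotProduct_eq_sum_posPart_iff ht0).mpr fun j _ => rfl⟩,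
    forall_mem_image.mpr fun t ht => dotProduct_le_sum_posPart ht⟩

theorem isLeast_dotProduct_image_mulVec_Icc :
    IsLeast ((c ⬝ᵥ ·) '' ((M *ᵥ ·) '' Icc 0 1)) (-∑ j, ((c ᵥ* M) j)⁻) := by
  have := Antitone.map_isGreatest (f := fun r : ℝ => -r) (fun _ _ h => neg_le_neg h)
    (isGreatest_dotProduct_image_mulVec_Icc M (-c))
  simpa [image_image, neg_vecMul, posPart_neg, neg_dotProduct] using this

theorem vectorSpan_setOf_dotProduct_eq_sum_posPart :
    vectorSpan ℝ {x ∈ (M *ᵥ ·) '' Icc 0 1 | c ⬝ᵥ x = ∑ j, ((c ᵥ* M) j)⁺} =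
      span ℝ (M.col '' {j | (c ᵥ* M) j = 0}) := by
  set w := c ᵥ* M
  set t0 : κ → ℝ := fun j => if 0 < w j then 1 else 0
  have hface : ∀ t ∈ Icc (0 : κ → ℝ) 1,
      c ⬝ᵥ M *ᵥ t = ∑ j, (w j)⁺ ↔ ∀ j, w j ≠ 0 → t j = t0 j := fun t ht => by
    rw [dotProduct_mulVec, dotProduct_eq_sum_posPart_iff ht]
  apply le_antisymm
  · rw [vectorSpan_def, span_le]
    rintro _ ⟨_, ⟨⟨t, ht, rfl⟩, htF⟩, _, ⟨⟨s, hs, rfl⟩, hsF⟩, rfl⟩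
    show M *ᵥ t - M *ᵥ s ∈ _
    rw [← mulVec_sub]
    refine mulVec_mem_span_col M fun j hj => ?_
    rw [Pi.sub_apply, (hface t ht).mp htF j hj, (hface s hs).mp hsF j hj, sub_self]
  · rw [span_le]
    rintro _ ⟨j, hj, rfl⟩
    have hmem : ∀ t ∈ Icc (0 : κ → ℝ) 1, (∀ k, w k ≠ 0 → t k = t0 k) →
        M *ᵥ t ∈ {x ∈ (M *ᵥ ·) '' Icc 0 1 | c ⬝ᵥ x = ∑ j, (w j)⁺} :=
      fun t ht h => ⟨⟨t, ht, rfl⟩, (hface t ht).mpr h⟩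
    have ht1 : t0 + Pi.single j 1 ∈ Icc 0 1 := by
      refine ⟨fun k => ?_, fun k => ?_⟩ <;> by_cases hk : k = j <;>
        simp [t0, hk, show w j = 0 from hj] <;> split_ifs <;> norm_num
    have := vsub_mem_vectorSpan ℝ (hmem _ ht1 fun k hk => ?_)
      (hmem t0 (ite_pos_mem_Icc w) fun _ _ => rfl)
    · rwa [vsub_eq_sub, mulVec_add, add_sub_cancel_left, mulVec_single_one] at this
    · have : k ≠ j := by rintro rfl; exact hk hj
      simp [this]

theorem setOf_dotProduct_eq_neg_sum_negPart :
    {x ∈ (M *ᵥ ·) '' Icc 0 1 | c ⬝ᵥ x = -∑ j, ((c ᵥ* M) j)⁻} =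
      {x ∈ (M *ᵥ ·) '' Icc 0 1 | -c ⬝ᵥ x = ∑ j, ((-c ᵥ* M) j)⁺} := by
  ext x
  simp [neg_vecMul, posPart_neg, neg_dotProduct, neg_eq_iff_eq_neg]

theorem vectorSpan_setOf_dotProduct_eq_neg_sum_negPart :
    vectorSpan ℝ {x ∈ (M *ᵥ ·) '' Icc 0 1 | c ⬝ᵥ x = -∑ j, ((c ᵥ* M) j)⁻} =
      span ℝ (M.col '' {j | (c ᵥ* M) j = 0}) := by
  rw [setOf_dotProduct_eq_neg_sum_negPart, vectorSpan_setOf_dotProduct_eq_sum_posPart,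
    neg_vecMul]
  simp only [Pi.neg_apply, neg_eq_zero]

end Zonotope

section Cocircuit

variable {ι κ : Type*} [Fintype ι] {K : Type*} [Field K]

theorem exists_isUnit_det_submatrix_of_span_eq_top [DecidableEq ι] (M : Matrix ι κ K)
    {T : Set κ} (hT : span K (M.col '' T) = ⊤) :
    ∃ g : ι → κ, (∀ k, g k ∈ T) ∧ IsUnit (M.submatrix id g).det := by
  obtain ⟨b, hbT, hspan, hli⟩ := exists_linearIndependent K (M.col '' T)
  let e := (Pi.basisFun K ι).indexEquiv (.mk hli (by rw [Subtype.range_coe, hspan, hT]))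
  choose g hgT hg using fun k => hbT (e k).2
  refine ⟨g, hgT, ?_⟩
  have hcol : (M.submatrix id g).col = Subtype.val ∘ e := funext hg
  rw [← isUnit_iff_isUnit_det, ← linearIndependent_cols_iff_isUnit, hcol]
  exact hli.comp e e.injective

variable [Fintype κ]

theorem injective_vecMul_intCast_of_rank_eq [CharZero K] {A : Matrix ι κ ℤ}
    (hrank : (A.map (Int.cast : ℤ → ℚ)).rank = Fintype.card ι) :
    Injective (A.map (Int.cast : ℤ → K)).vecMul := by
  have hspan : span ℚ (range (A.map (Int.cast : ℤ → ℚ)).col) = ⊤ := by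
    apply eq_top_of_finrank_eq
    rw [← rank_eq_finrank_span_cols, hrank, finrank_fintype_fun_eq_card]
  obtain ⟨g, -, hg⟩ :=
    exists_isUnit_det_submatrix_of_span_eq_top _ (T := univ) (by rwa [image_univ])
  have hdet : ((A.submatrix id g).det : K) ≠ 0 := by
    have : ((A.submatrix id g).det : ℚ) ≠ 0 := by
      rw [Int.cast_det]; exact hg.ne_zero
    exact_mod_cast this
  rw [Int.cast_det] at hdet
  intro x y hxy
  apply vecMul_injective_iff_isUnit.mpr ((isUnit_iff_isUnit_det _).mpr (Ne.isUnit hdet))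
  funext k
  exact congrFun hxy (g k)

-- `c ᵥ* M` is a cocircuit vector of the row space of `M`.
def IsCocircuit (M : Matrix ι κ K) (c : ι → K) : Prop :=
  c ᵥ* M ≠ 0 ∧ ∀ b : ι → K, b ᵥ* M ≠ 0 → support (b ᵥ* M) ⊆ support (c ᵥ* M) →
    support (b ᵥ* M) = support (c ᵥ* M)

variable {M : Matrix ι κ K} {c : ι → K}

theorem IsCocircuit.ker_vecMulLinear_submatrix (hcoc : IsCocircuit M c)
    (hinj : Injective M.vecMul) :
    LinearMap.ker (M.submatrix id ((↑) : {j // (c ᵥ* M) j = 0} → κ)).vecMulLinear = K ∙ c := by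
  refine le_antisymm (fun b hb => ?_)
    ((span_singleton_le_iff_mem _ _).mpr (funext fun j => j.2))
  have hbM : ∀ j, (c ᵥ* M) j = 0 → (b ᵥ* M) j = 0 := fun j hj => congrFun hb ⟨j, hj⟩
  obtain ⟨j1, hj1⟩ : ∃ j1, (c ᵥ* M) j1 ≠ 0 := Function.ne_iff.mp hcoc.1
  set r := (b ᵥ* M) j1 / (c ᵥ* M) j1
  suffices (b - r • c) ᵥ* M = 0 ᵥ* M by
    rw [sub_eq_zero.mp (hinj this)]
    exact smul_mem _ _ (mem_span_singleton_self c)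
  by_contra hne
  rw [zero_vecMul] at hne
  have hsupp : support ((b - r • c) ᵥ* M) ⊆ support (c ᵥ* M) := fun j hj => by
    by_contra hcj
    simp_all [sub_vecMul, smul_vecMul]
  have hj1' : j1 ∉ support ((b - r • c) ᵥ* M) := by
    simp [sub_vecMul, smul_vecMul, r, div_mul_cancel₀ _ hj1]
  exact hj1' (hcoc.2 _ hne hsupp ▸ hj1)

theorem IsCocircuit.finrank_span_col (hcoc : IsCocircuit M c) (hinj : Injective M.vecMul) :
    finrank K (span K (M.col '' {j | (c ᵥ* M) j = 0})) = Fintype.card ι - 1 := by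
  set N := M.submatrix id ((↑) : {j // (c ᵥ* M) j = 0} → κ)
  have hcols : M.col '' {j | (c ᵥ* M) j = 0} = range N.col := by
    rw [image_eq_range]; rfl
  have hc0 : c ≠ 0 := by rintro rfl; exact hcoc.1 (zero_vecMul M)
  have := N.vecMulLinear.finrank_range_add_finrank_ker
  rw [hcoc.ker_vecMulLinear_submatrix hinj, finrank_span_singleton hc0, range_vecMulLinear,
    ← rank_eq_finrank_span_row, finrank_fintype_fun_eq_card] at this
  rw [hcols, ← rank_eq_finrank_span_cols]
  omega

theorem IsCocircuit.span_col_insert (hcoc : IsCocircuit M c) (hinj : Injective M.vecMul)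
    {j0 : κ} (hj0 : (c ᵥ* M) j0 ≠ 0) :
    span K (M.col '' insert j0 {j | (c ᵥ* M) j = 0}) = ⊤ := by
  set W := span K (M.col '' {j | (c ᵥ* M) j = 0})
  have hW : W ≤ LinearMap.ker (dotProductEquiv K ι c) := by
    rw [span_le]
    rintro _ ⟨j, hj, rfl⟩
    exact hj
  have hlt : W < span K (M.col '' insert j0 {j | (c ᵥ* M) j = 0}) := by
    refine lt_of_le_of_ne (span_mono (image_mono (subset_insert _ _))) fun h => hj0 ?_
    exact hW (h ▸ subset_span (mem_image_of_mem _ (mem_insert _ _)))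
  have := finrank_lt_finrank_of_lt hlt
  have := (span K (M.col '' insert j0 {j | (c ᵥ* M) j = 0})).finrank_le
  rw [hcoc.finrank_span_col hinj] at *
  apply eq_top_of_finrank_eq
  rw [finrank_fintype_fun_eq_card] at *
  omega

end Cocircuit

section Facets

variable {ι κ : Type*} [Fintype ι] [Fintype κ] {M : Matrix ι κ ℝ} {c : ι → ℝ}

theorem IsCocircuit.finrank_direction_maxFace (hcoc : IsCocircuit M c)
    (hinj : Injective M.vecMul) :
    finrank ℝ (affineSpan ℝ {x ∈ (M *ᵥ ·) '' Icc 0 1 | c ⬝ᵥ x = ∑ j, ((c ᵥ* M) j)⁺}).direction =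
      Fintype.card ι - 1 := by
  rw [direction_affineSpan, vectorSpan_setOf_dotProduct_eq_sum_posPart,
    hcoc.finrank_span_col hinj]

theorem IsCocircuit.finrank_direction_minFace (hcoc : IsCocircuit M c)
    (hinj : Injective M.vecMul) :
    finrank ℝ (affineSpan ℝ {x ∈ (M *ᵥ ·) '' Icc 0 1 | c ⬝ᵥ x = -∑ j, ((c ᵥ* M) j)⁻}).direction =
      Fintype.card ι - 1 := by
  rw [direction_affineSpan, vectorSpan_setOf_dotProduct_eq_neg_sum_negPart,
    hcoc.finrank_span_col hinj]

end Facets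

section Integrality

variable {ι κ : Type*} [Fintype ι]

theorem dvd_of_vecMul_eq_of_isUnit_det_submatrix [DecidableEq ι] {A : Matrix ι κ ℤ}
    {v : κ → ℤ} {c : ι → ℝ} (hvc : c ᵥ* A.map (↑) = (↑) ∘ v) {j0 : κ} {g : ι → κ}
    (hg : ∀ k, g k = j0 ∨ v (g k) = 0) (hdet : IsUnit (A.submatrix id g).det) (j : κ) :
    v j0 ∣ v j := by
  set B := A.submatrix id g
  set m : ι → ℤ := (fun k => if g k = j0 then 1 else 0) ᵥ* B⁻¹
  have hmB : (v j0 • m) ᵥ* B = v ∘ g := by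
    rw [smul_vecMul, vecMul_vecMul, nonsing_inv_mul B hdet, vecMul_one]
    funext k
    by_cases h : g k = j0
    · simp [h]
    · simp [h, (hg k).resolve_left h]
  have hdetR : IsUnit (B.map ((↑) : ℤ → ℝ)).det := by
    rw [← Int.cast_det]; exact hdet.map (Int.castRingHom ℝ)
  -- `c` solves the same nonsingular system as the integral vector `v j0 • m`.
  have hc : c = (↑) ∘ (v j0 • m) := by
    apply vecMul_injective_iff_isUnit.mpr ((isUnit_iff_isUnit_det _).mpr hdetR)
    funext k
    have := RingHom.map_vecMul (Int.castRingHom ℝ) B (v j0 • m) k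
    simp only [Int.coe_castRingHom, hmB] at this
    exact (congrFun hvc (g k)).trans this
  refine ⟨(m ᵥ* A) j, Int.cast_injective (α := ℝ) ?_⟩
  have := RingHom.map_vecMul (Int.castRingHom ℝ) A (v j0 • m) j
  simp only [Int.coe_castRingHom, ← hc, smul_vecMul] at this
  exact (congrFun hvc j).symm.trans this.symm

theorem eq_one_of_forall_dvd_of_primitive {v : κ → ℤ}
    (hprim : ∀ α : ℝ, 0 < α → α < 1 → ¬ ∃ w : κ → ℤ, ∀ j, (w j : ℝ) = α * (v j : ℝ))
    {k : ℤ} (hk : 0 < k) (hdvd : ∀ j, k ∣ v j) : k = 1 := by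
  by_contra hk1
  have hkR : (1 : ℝ) < k := by exact_mod_cast lt_of_le_of_ne hk (Ne.symm hk1)
  choose w hw using hdvd
  refine hprim (k : ℝ)⁻¹ (by positivity) (inv_lt_one_of_one_lt₀ hkR) ⟨w, fun j => ?_⟩
  rw [hw j, Int.cast_mul, inv_mul_cancel_left₀ (by positivity)]

end Integrality

theorem zonotope_eq_image_mulVec_Icc (d n : ℕ) (A : Matrix (Fin d) (Fin n) ℤ) :
    zonotope d n A = ((A.map (↑) : Matrix (Fin d) (Fin n) ℝ) *ᵥ ·) '' Icc 0 1 := by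
  ext x
  constructor
  · rintro ⟨t, ht, hx⟩
    exact ⟨t, ⟨fun j => (ht j).1, fun j => (ht j).2⟩, funext fun i => (hx i).symm⟩
  · rintro ⟨t, ht, rfl⟩
    exact ⟨t, fun j => ⟨ht.1 j, ht.2 j⟩, fun i => rfl⟩

theorem abs_eq_one_of_unimodular_of_isCocircuit {d n : ℕ} {A : Matrix (Fin d) (Fin n) ℤ}
    (hA : Unimodular d n A) {v : Fin n → ℤ} {c : Fin d → ℝ} (hvc : c ᵥ* A.map (↑) = (↑) ∘ v)
    (hcoc : IsCocircuit (A.map (↑)) c) (hinj : Injective (A.map ((↑) : ℤ → ℝ)).vecMul)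
    (hprim : ∀ α : ℝ, 0 < α → α < 1 → ¬ ∃ w : Fin n → ℤ, ∀ j, (w j : ℝ) = α * (v j : ℝ))
    {j0 : Fin n} (hj0 : v j0 ≠ 0) : |v j0| = 1 := by
  have hj0' : (c ᵥ* A.map (↑)) j0 ≠ 0 := by
    rw [hvc, Function.comp_apply]; exact_mod_cast hj0
  obtain ⟨g, hgT, hg⟩ :=
    exists_isUnit_det_submatrix_of_span_eq_top _ (hcoc.span_col_insert hinj hj0')
  have hdet : IsUnit (A.submatrix id g).det := by
    have hne : (A.submatrix id g).det ≠ 0 := fun h => by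
      have : IsUnit ((A.submatrix id g).map ((↑) : ℤ → ℝ)).det := hg
      rw [← Int.cast_det, h, Int.cast_zero] at this
      exact not_isUnit_zero this
    rcases hA g with h | h | h
    · exact h ▸ isUnit_one.neg
    · exact absurd h hne
    · exact h ▸ isUnit_one
  have hg' : ∀ k, g k = j0 ∨ v (g k) = 0 := fun k => (hgT k).imp id fun h => by
    have : ((v (g k) : ℤ) : ℝ) = 0 := (congrFun hvc (g k)).symm.trans h
    exact_mod_cast this
  exact eq_one_of_forall_dvd_of_primitive hprim (abs_pos.mpr hj0) fun j =>
    (abs_dvd _ _).mpr (dvd_of_vecMul_eq_of_isUnit_det_submatrix hvc hg' hdet j)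

theorem sum_abs_intCast_eq_card {κ : Type*} [Fintype κ] {v : κ → ℤ}
    (hv : ∀ j, v j ≠ 0 → |v j| = 1) :
    ∑ j, |(v j : ℝ)| = (Finset.univ.filter (fun j => v j ≠ 0)).card := by
  rw [Finset.card_filter, Nat.cast_sum]
  refine Finset.sum_congr rfl fun j _ => ?_
  by_cases h : v j = 0
  · simp [h]
  · simp [h, ← Int.cast_abs, hv j h]

/-- Let `v ∈ L_ℝ ∩ ℤ^n` be a primitive cocircuit vector and `c ∈ ℝ^d` the
vector with `Aᵀc = v`. Then `max_{x∈Z}⟨c,x⟩ − min_{x∈Z}⟨c,x⟩ = m(v)`, and the argmax and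
argmin sets are facets of `Z`: exposed faces whose affine span has dimension `d−1`. -/
theorem stmt9 (d n : ℕ) (A : Matrix (Fin d) (Fin n) ℤ)
    (hrank : (A.map (fun a => (a : ℚ))).rank = d)
    (hA : Unimodular d n A)
    (v : Fin n → ℤ) (c : Fin d → ℝ)
    (hvc : ∀ j, (v j : ℝ) = ∑ i, c i * (A i j : ℝ))
    (hv0 : v ≠ 0)
    (hcocirc : ∀ w : Fin n → ℝ,
      (∃ b : Fin d → ℝ, ∀ j, w j = ∑ i, b i * (A i j : ℝ)) → w ≠ 0 →
      {j | w j ≠ 0} ⊆ {j | v j ≠ 0} → {j | w j ≠ 0} = {j | v j ≠ 0})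
    (hprim : ∀ α : ℝ, 0 < α → α < 1 → ¬ ∃ w : Fin n → ℤ, ∀ j, (w j : ℝ) = α * (v j : ℝ)) :
    ∃ Mx mn : ℝ,
      IsGreatest ((fun x => ∑ i, c i * x i) '' zonotope d n A) Mx ∧
      IsLeast ((fun x => ∑ i, c i * x i) '' zonotope d n A) mn ∧
      Mx - mn = ((Finset.univ.filter (fun j => v j ≠ 0)).card : ℝ) ∧
      IsExposed ℝ (zonotope d n A) {x ∈ zonotope d n A | ∑ i, c i * x i = Mx} ∧
      IsExposed ℝ (zonotope d n A) {x ∈ zonotope d n A | ∑ i, c i * x i = mn} ∧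
      Module.finrank ℝ
        (affineSpan ℝ {x ∈ zonotope d n A | ∑ i, c i * x i = Mx}).direction = d - 1 ∧
      Module.finrank ℝ
        (affineSpan ℝ {x ∈ zonotope d n A | ∑ i, c i * x i = mn}).direction = d - 1 := by
  rw [zonotope_eq_image_mulVec_Icc]
  set Ar : Matrix (Fin d) (Fin n) ℝ := A.map (↑)
  have hvc' : c ᵥ* Ar = (↑) ∘ v := funext fun j => (hvc j).symm
  have hinj : Injective Ar.vecMul := injective_vecMul_intCast_of_rank_eq (by simpa using hrank)
  have hcoc : IsCocircuit Ar c := by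
    have hsupp : support (c ᵥ* Ar) = {j | v j ≠ 0} := by ext j; simp [hvc']
    refine ⟨fun h => hv0 (funext fun j => ?_), fun b hb hsub => ?_⟩
    · simpa using congrFun (hvc'.symm.trans h) j
    · rw [hsupp] at hsub ⊢
      exact hcocirc _ ⟨b, fun j => rfl⟩ hb hsub
  let l : StrongDual ℝ (Fin d → ℝ) := LinearMap.toContinuousLinearMap (dotProductEquiv ℝ _ c)
  have hmax := isGreatest_dotProduct_image_mulVec_Icc Ar c
  have hmin := isLeast_dotProduct_image_mulVec_Icc Ar c
  refine ⟨_, _, hmax, hmin, ?_, hmax.isExposed_setOf_eq (l := l), hmin.isExposed_setOf_eq (l := l),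
    (hcoc.finrank_direction_maxFace hinj).trans (by simp),
    (hcoc.finrank_direction_minFace hinj).trans (by simp)⟩
  rw [sub_neg_eq_add, ← Finset.sum_add_distrib, ← sum_abs_intCast_eq_card fun j hj =>
    abs_eq_one_of_unimodular_of_isCocircuit hA hvc' hcoc hinj hprim hj]
  simp only [posPart_add_negPart, hvc', Function.comp_apply]
end
end

section
/- Let m ≥ 1 and let L(m) ⊆ ℂ^{m×n} be the image of L under the diagonal embedding v ↦ (v,…,v). The ℂ-linear map γ̃ from the span of the variables z_S (S ⊆ [m]×[n]) to ℂ[z_S : S ⊆ [n]] defined by γ̃(z_S) = ∏_{i=1}^m z_{S_{i,*}} maps the degree-one component of I_{L(m)}^SE into I_L^SE, and therefore induces a well-defined surjective ℂ-linear map γ : (R_{L(m)})_1 → (R_L)_m from the degree-1 graded component of R_{L(m)} := ℂ[z_S : S ⊆ [m]×[n]]/I_{L(m)}^SE onto the degree-m graded component of R_L := ℂ[z_S : S ⊆ [n]]/I_L^SE. -/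
open scoped Classical

noncomputable section

/-- `I` is independent in the matroid `M` of `L ⊆ ℂ^E`: the coordinate projection `pr_I`
maps `L` onto `ℂ^I`. -/
def Indep (E : Type) (L : Submodule ℂ (E → ℂ)) (I : Finset E) : Prop :=
  ∀ y : E → ℂ, ∃ x ∈ L, ∀ i ∈ I, x i = y i

/-- `C` is a circuit of the matroid of `L`: a minimal dependent set. -/
def IsCircuit (E : Type) (L : Submodule ℂ (E → ℂ)) (C : Finset E) : Prop :=
  ¬ Indep E L C ∧ ∀ C' ⊂ C, Indep E L C'

/-- `α` is valid circuit-coefficient data for `L`: for each circuit `C`, `(α C i)_{i∈C}` is a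
nonzero vector (unique up to scaling) such that `Σ_{i∈C} α_{C,i} x_i` vanishes on `L`. -/
def CircuitData (E : Type) (L : Submodule ℂ (E → ℂ)) (α : Finset E → E → ℂ) : Prop :=
  ∀ C : Finset E, IsCircuit E L C →
    (∃ i ∈ C, α C i ≠ 0) ∧ (∀ v ∈ L, ∑ i ∈ C, α C i * v i = 0)

/-- The ideal `I_L^SE ⊆ ℂ[z_S : S ⊆ E]`, generated by the binomials
`z_S z_T − z_{S∪T} z_{S∩T}` and the linear forms `f_C^A(z) = Σ_{i∈C} α_{C,i} z_{A∪{i}}`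
for circuits `C` and `A ⊆ E ∖ C`. -/
def SEIdeal (E : Type) [DecidableEq E] (L : Submodule ℂ (E → ℂ)) (α : Finset E → E → ℂ) :
    Ideal (MvPolynomial (Finset E) ℂ) :=
  Ideal.span
    ({p | ∃ S T : Finset E, p = MvPolynomial.X S * MvPolynomial.X T -
        MvPolynomial.X (S ∪ T) * MvPolynomial.X (S ∩ T)} ∪
     {p | ∃ C A : Finset E, IsCircuit E L C ∧ Disjoint A C ∧
        p = ∑ i ∈ C, MvPolynomial.C (α C i) * MvPolynomial.X (insert i A)})

/-- The `i`-th row `S_{i,*} ⊆ [n]` of a subset `S ⊆ [m]×[n]` viewed as a 0/1 matrix. -/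
def rowOf (m n : ℕ) (S : Finset (Fin m × Fin n)) (i : Fin m) : Finset (Fin n) :=
  (S.filter (fun p => p.1 = i)).image Prod.snd

/-- The `m`-thickening `L(m) ⊆ ℂ^{[m]×[n]}`: the image of `L` under the diagonal embedding. -/
def thickening (n m : ℕ) (L : Submodule ℂ (Fin n → ℂ)) :
    Submodule ℂ (Fin m × Fin n → ℂ) :=
  Submodule.map (LinearMap.funLeft ℂ ℂ (Prod.snd : Fin m × Fin n → Fin n)) L

/-- The algebra map `γ̃ : ℂ[z_S : S ⊆ [m]×[n]] → ℂ[z_S : S ⊆ [n]]`,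
`γ̃(z_S) = ∏_{i=1}^m z_{S_{i,*}}`. -/
def gammaTilde (m n : ℕ) :
    MvPolynomial (Finset (Fin m × Fin n)) ℂ →ₐ[ℂ] MvPolynomial (Finset (Fin n)) ℂ :=
  MvPolynomial.aeval (fun S : Finset (Fin m × Fin n) =>
    ∏ i : Fin m, MvPolynomial.X (rowOf m n S i))

/-!
Uncrossing `z_S z_T ↦ z_{S ∪ T} z_{S ∩ T}` shows that, modulo the binomial part of `I_L^SE`,
a monomial `∏ z_{S_k}` depends only on the number of factors and on how many `S_k` contain each
`x`. Since `γ̃` preserves both data row by row, it maps binomials to binomials. For a linear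
generator `f_C^A` with `C` a circuit of `L(m)`, each term `γ̃(z_{A ∪ {p}})` is congruent to
`z_{W ∪ {p₂}} · P`, where `W` and `P` depend only on `A`. The coefficients of `f_C^A`, summed
over the columns `p₂`, give a linear relation on `L` supported on the projection `C₀` of `C`.
This set is either independent, when the relation is trivial, or a circuit of `L`, when the
relation is proportional to `α_{C₀}`. Either way `γ̃(f_C^A)` lies in `ℂ · P f_{C₀}^W` plus the
binomial ideal.
Surjectivity holds on monomials: a monomial of degree `m` is `γ̃(z_S)` for the
`S ⊆ [m]×[n]` whose rows are its factors.
-/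

open MvPolynomial Finset

section Uncrossing

variable {R β : Type*} [CommRing R]

def zProd (M : Multiset (Finset β)) : MvPolynomial (Finset β) R := (M.map X).prod

def IsSubsetChain (M : Multiset (Finset β)) : Prop := ∀ S ∈ M, ∀ T ∈ M, S ⊆ T ∨ T ⊆ S

lemma zProd_cons (S : Finset β) (M : Multiset (Finset β)) :
    (zProd (S ::ₘ M) : MvPolynomial (Finset β) R) = X S * zProd M := by
  simp [zProd]

lemma zProd_add (M N : Multiset (Finset β)) :
    (zProd (M + N) : MvPolynomial (Finset β) R) = zProd M * zProd N := by
  simp [zProd]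

lemma IsSubsetChain.mono {M N : Multiset (Finset β)} (hM : IsSubsetChain M) (hNM : N ≤ M) :
    IsSubsetChain N :=
  fun S hS T hT => hM S (Multiset.mem_of_le hNM hS) T (Multiset.mem_of_le hNM hT)

variable [DecidableEq β]

variable (R β) in
def binomialIdeal : Ideal (MvPolynomial (Finset β) R) :=
  Ideal.span {p | ∃ S T : Finset β, p = X S * X T - X (S ∪ T) * X (S ∩ T)}

def memCount (x : β) (M : Multiset (Finset β)) : ℕ := M.countP (x ∈ ·)

lemma memCount_cons (x : β) (S : Finset β) (M : Multiset (Finset β)) :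
    memCount x (S ::ₘ M) = memCount x M + if x ∈ S then 1 else 0 :=
  Multiset.countP_cons _ _ _

lemma memCount_add (x : β) (M N : Multiset (Finset β)) :
    memCount x (M + N) = memCount x M + memCount x N :=
  Multiset.countP_add _ _ _

lemma IsSubsetChain.exists_mem_forall_mem_iff {M : Multiset (Finset β)} (hM : IsSubsetChain M)
    (hM0 : M ≠ 0) : ∃ S ∈ M, ∀ x, x ∈ S ↔ 0 < memCount x M := by
  obtain ⟨S, hS, hmax⟩ := Multiset.exists_max_image Finset.card hM0
  have hsub : ∀ T ∈ M, T ⊆ S := fun T hT =>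
    (hM S hS T hT).elim (fun hST => (eq_of_subset_of_card_le hST (hmax T hT)).ge) id
  refine ⟨S, hS, fun x => ⟨fun hx => Multiset.countP_pos.2 ⟨S, hS, hx⟩, fun hx => ?_⟩⟩
  obtain ⟨T, hT, hxT⟩ := Multiset.countP_pos.1 hx
  exact hsub T hT hxT

lemma IsSubsetChain.eq_of_memCount_eq {M N : Multiset (Finset β)} (hM : IsSubsetChain M)
    (hN : IsSubsetChain N) (hcard : M.card = N.card) (hcount : ∀ x, memCount x M = memCount x N) :
    M = N := by
  induction M using Multiset.strongInductionOn generalizing N with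
  | ih M IH =>
  rcases eq_or_ne M 0 with rfl | hM0
  · exact (Multiset.card_eq_zero.1 hcard.symm).symm
  have hN0 : N ≠ 0 := by rintro rfl; exact hM0 (Multiset.card_eq_zero.1 hcard)
  obtain ⟨S, hS, hSM⟩ := hM.exists_mem_forall_mem_iff hM0
  obtain ⟨S', hS', hSN⟩ := hN.exists_mem_forall_mem_iff hN0
  obtain rfl : S = S' := by ext x; rw [hSM, hSN, hcount]
  rw [← Multiset.cons_erase hS, ← Multiset.cons_erase hS'] at hcard hcount ⊢
  simp only [Multiset.card_cons, memCount_cons, Nat.add_right_cancel_iff] at hcard hcount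
  rw [IH _ (Multiset.erase_lt.2 hS) (hM.mono (Multiset.erase_le S M))
    (hN.mono (Multiset.erase_le S N)) hcard hcount]

lemma sq_card_add_sq_card_lt {S T : Finset β} (hST : ¬ S ⊆ T) (hTS : ¬ T ⊆ S) :
    S.card ^ 2 + T.card ^ 2 < (S ∪ T).card ^ 2 + (S ∩ T).card ^ 2 := by
  have hsum := card_union_add_card_inter S T
  have hS : (S ∩ T).card < S.card :=
    card_lt_card ⟨inter_subset_left, fun h => hST fun x hx => (mem_inter.1 (h hx)).2⟩
  have hT : (S ∩ T).card < T.card :=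
    card_lt_card ⟨inter_subset_right, fun h => hTS fun x hx => (mem_inter.1 (h hx)).1⟩
  nlinarith

variable [Fintype β]

/-- Uncrossing strictly increases `∑ |S|²`, which is at most `|β|²` per factor. -/
def uncrossPotential (M : Multiset (Finset β)) : ℕ :=
  (M.map fun S => Fintype.card β ^ 2 - S.card ^ 2).sum

lemma exists_uncross {M : Multiset (Finset β)} (hM : ¬ IsSubsetChain M) :
    ∃ M' : Multiset (Finset β),
      (zProd M - zProd M' : MvPolynomial (Finset β) R) ∈ binomialIdeal R β ∧
      M'.card = M.card ∧ (∀ x, memCount x M' = memCount x M) ∧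
      uncrossPotential M' < uncrossPotential M := by
  simp only [IsSubsetChain, not_forall, not_or] at hM
  obtain ⟨S, hS, T, hT, hST, hTS⟩ := hM
  have hTS' : T ≠ S := by rintro rfl; exact hST subset_rfl
  obtain ⟨M₀, rfl⟩ : ∃ M₀, M = S ::ₘ T ::ₘ M₀ :=
    ⟨(M.erase S).erase T, by
      rw [Multiset.cons_erase ((Multiset.mem_erase_of_ne hTS').2 hT), Multiset.cons_erase hS]⟩
  refine ⟨(S ∪ T) ::ₘ (S ∩ T) ::ₘ M₀, ?_, by simp, fun x => ?_, ?_⟩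
  · rw [zProd_cons, zProd_cons, zProd_cons, zProd_cons,
      show ∀ a b c d P : MvPolynomial (Finset β) R,
          a * (b * P) - c * (d * P) = (a * b - c * d) * P from fun _ _ _ _ _ => by ring]
    exact Ideal.mul_mem_right _ _ (Ideal.subset_span ⟨S, T, rfl⟩)
  · simp only [memCount_cons, mem_union, mem_inter]
    by_cases hxS : x ∈ S <;> by_cases hxT : x ∈ T <;> simp [hxS, hxT]
  · have hlt := sq_card_add_sq_card_lt hST hTS
    have hle : ∀ U : Finset β, U.card ^ 2 ≤ Fintype.card β ^ 2 := fun U =>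
      Nat.pow_le_pow_left (card_le_univ U) 2
    have := hle S; have := hle T; have := hle (S ∪ T); have := hle (S ∩ T)
    simp only [uncrossPotential, Multiset.map_cons, Multiset.sum_cons]
    omega

lemma exists_isSubsetChain_sub_mem (M : Multiset (Finset β)) :
    ∃ N : Multiset (Finset β), IsSubsetChain N ∧ N.card = M.card ∧
      (∀ x, memCount x N = memCount x M) ∧
      (zProd M - zProd N : MvPolynomial (Finset β) R) ∈ binomialIdeal R β := by
  induction h : uncrossPotential M using Nat.strong_induction_on generalizing M with
  | _ k IH =>
  by_cases hM : IsSubsetChain M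
  · exact ⟨M, hM, rfl, fun _ => rfl, by simp⟩
  obtain ⟨M', hMM', hcard, hcount, hpot⟩ := exists_uncross (R := R) hM
  obtain ⟨N, hN, hcard', hcount', hM'N⟩ := IH _ (h ▸ hpot) M' rfl
  exact ⟨N, hN, hcard'.trans hcard, fun x => (hcount' x).trans (hcount x),
    by rw [← sub_add_sub_cancel _ (zProd M')]; exact add_mem hMM' hM'N⟩

theorem zProd_sub_zProd_mem_binomialIdeal {M N : Multiset (Finset β)} (hcard : M.card = N.card)
    (hcount : ∀ x, memCount x M = memCount x N) :
    (zProd M - zProd N : MvPolynomial (Finset β) R) ∈ binomialIdeal R β := by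
  obtain ⟨M', hM', hcardM, hcountM, hMM'⟩ := exists_isSubsetChain_sub_mem (R := R) M
  obtain ⟨N', hN', hcardN, hcountN, hNN'⟩ := exists_isSubsetChain_sub_mem (R := R) N
  obtain rfl : M' = N' :=
    hM'.eq_of_memCount_eq hN' (by omega) fun x => by rw [hcountM, hcountN, hcount]
  rw [← sub_sub_sub_cancel_right _ _ (zProd M')]
  exact sub_mem hMM' hNN'

end Uncrossing

section Rows

variable {m n : ℕ}

lemma mem_rowOf {S : Finset (Fin m × Fin n)} {k : Fin m} {x : Fin n} :
    x ∈ rowOf m n S k ↔ (k, x) ∈ S := by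
  simp [rowOf]

def colCount (S : Finset (Fin m × Fin n)) (x : Fin n) : ℕ := #{k | (k, x) ∈ S}

lemma memCount_rowOf (S : Finset (Fin m × Fin n)) (x : Fin n) :
    memCount x (univ.val.map (rowOf m n S)) = colCount S x := by
  simp only [memCount, colCount, Multiset.countP_map, mem_rowOf, card_def, filter_val]

lemma gammaTilde_X (S : Finset (Fin m × Fin n)) :
    gammaTilde m n (X S) = zProd (univ.val.map (rowOf m n S)) := by
  rw [gammaTilde, aeval_X, prod_eq_multiset_prod, zProd, Multiset.map_map]
  rfl

lemma colCount_union_add_colCount_inter (S T : Finset (Fin m × Fin n)) (x : Fin n) :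
    colCount (S ∪ T) x + colCount (S ∩ T) x = colCount S x + colCount T x := by
  simp only [colCount, mem_union, mem_inter, filter_or, filter_and]
  exact card_union_add_card_inter _ _

lemma colCount_insert {A : Finset (Fin m × Fin n)} {p : Fin m × Fin n} (hp : p ∉ A)
    (x : Fin n) :
    colCount (insert p A) x = colCount A x + if p.2 = x then 1 else 0 := by
  unfold colCount
  split_ifs with hx
  · subst hx
    have : univ.filter (fun k => (k, p.2) ∈ insert p A) =
        insert p.1 (univ.filter fun k => (k, p.2) ∈ A) := by
      ext k
      simp [Prod.ext_iff, eq_comm]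
    rw [this, card_insert_of_notMem (by simpa using hp)]
  · simp [Prod.ext_iff, Ne.symm hx]

lemma colCount_le (A : Finset (Fin m × Fin n)) (x : Fin n) : colCount A x ≤ m :=
  (card_le_univ _).trans_eq (Fintype.card_fin m)

lemma colCount_lt {A : Finset (Fin m × Fin n)} {p : Fin m × Fin n} (hp : p ∉ A) :
    colCount A p.2 < m :=
  (card_lt_univ_of_notMem (x := p.1) (by simpa using hp)).trans_eq (Fintype.card_fin m)

def levelSet (A : Finset (Fin m × Fin n)) (s : ℕ) : Finset (Fin n) := {x | s ≤ colCount A x}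

def lowerLevels (A : Finset (Fin m × Fin n)) : Multiset (Finset (Fin n)) :=
  (Multiset.range (m - 1)).map fun s => levelSet A (s + 1)

lemma Multiset.countP_range_lt (c k : ℕ) : (Multiset.range k).countP (· < c) = min c k := by
  induction k with
  | zero => simp
  | succ k ih =>
    rw [Multiset.range_succ, Multiset.countP_cons, ih]
    split <;> omega

lemma memCount_lowerLevels (A : Finset (Fin m × Fin n)) (x : Fin n) :
    memCount x (lowerLevels A) = min (colCount A x) (m - 1) := by
  rw [memCount, lowerLevels, Multiset.countP_map, ← Multiset.countP_eq_card_filter,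
    ← Multiset.countP_range_lt]
  refine Multiset.countP_congr rfl fun s _ => ?_
  simp [levelSet]

/-- Both sides cover column `x` exactly `colCount A x + [x = p₂]` times: `lowerLevels A` covers it
`min (colCount A x) (m - 1)` times, and `p₂` is not in `levelSet A m`. -/
lemma gammaTilde_X_insert_sub_mem {A : Finset (Fin m × Fin n)} {p : Fin m × Fin n}
    (hp : p ∉ A) :
    gammaTilde m n (X (insert p A)) - X (insert p.2 (levelSet A m)) * zProd (lowerLevels A)
      ∈ binomialIdeal ℂ (Fin n) := by
  have hm : 0 < m := p.1.pos
  rw [gammaTilde_X, ← zProd_cons]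
  apply zProd_sub_zProd_mem_binomialIdeal
  · simp only [Multiset.card_map, card_val, card_univ, Fintype.card_fin, lowerLevels,
      Multiset.card_cons, Multiset.card_range]
    omega
  · intro x
    rw [memCount_rowOf, colCount_insert hp, memCount_cons, memCount_lowerLevels]
    have := colCount_le A x
    by_cases hx : p.2 = x
    · have := colCount_lt hp
      subst hx
      simp only [if_pos, mem_insert_self]
      omega
    · simp only [hx, Ne.symm hx, if_false, levelSet, mem_insert, mem_filter, mem_univ, true_and,
        false_or]
      split_ifs <;> omega

lemma gammaTilde_binomial_mem (S T : Finset (Fin m × Fin n)) :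
    gammaTilde m n (X S * X T - X (S ∪ T) * X (S ∩ T)) ∈ binomialIdeal ℂ (Fin n) := by
  simp only [map_sub, map_mul, gammaTilde_X, ← zProd_add]
  apply zProd_sub_zProd_mem_binomialIdeal
  · simp
  · intro x
    simp only [memCount_add, memCount_rowOf, colCount_union_add_colCount_inter]

end Rows

lemma Finset.sum_image_fiber_smul {ι κ S M : Type*} [DecidableEq κ] [Semiring S]
    [AddCommMonoid M] [Module S M] (s : Finset ι) (g : ι → κ) (a : ι → S) (h : κ → M) :
    ∑ j ∈ s.image g, (∑ i ∈ s with g i = j, a i) • h j = ∑ i ∈ s, a i • h (g i) := by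
  simp_rw [Finset.sum_smul]
  rw [← Finset.sum_fiberwise_of_maps_to fun i hi => mem_image_of_mem g hi]
  refine sum_congr rfl fun j _ => sum_congr rfl fun i hi => ?_
  rw [(mem_filter.1 hi).2]

section Matroid

variable {E : Type} {L : Submodule ℂ (E → ℂ)}

lemma Indep.eq_zero_of_forall_sum_mul_eq_zero {I : Finset E} (hI : Indep E L I) {δ : E → ℂ}
    (hδ : ∀ v ∈ L, ∑ i ∈ I, δ i * v i = 0) : ∀ i ∈ I, δ i = 0 := by
  intro i hi
  obtain ⟨v, hv, hvi⟩ := hI (Pi.single i 1)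
  have := hδ v hv
  rwa [sum_congr rfl fun j hj => by rw [hvi j hj], sum_eq_single_of_mem i hi
    fun j _ hji => by rw [Pi.single_eq_of_ne hji, mul_zero], Pi.single_eq_same, mul_one] at this

lemma IsCircuit.exists_eq_mul {K : Finset E} (hK : IsCircuit E L K) {α : Finset E → E → ℂ}
    (hα : CircuitData E L α) {δ : E → ℂ} (hδ : ∀ v ∈ L, ∑ i ∈ K, δ i * v i = 0) :
    ∃ c : ℂ, ∀ i ∈ K, δ i = c * α K i := by
  obtain ⟨⟨j, hj, hαj⟩, hαL⟩ := hα K hK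
  set c := δ j / α K j
  have hj0 : δ j - c * α K j = 0 := by simp [c, hαj]
  have hker : ∀ v ∈ L, ∑ i ∈ K.erase j, (δ i - c * α K i) * v i = 0 := fun v hv => by
    rw [sum_erase _ (by rw [hj0, zero_mul])]
    simp only [sub_mul, sum_sub_distrib, mul_assoc, ← mul_sum, hδ v hv, hαL v hv, mul_zero,
      sub_zero]
  have hzero := (hK.2 _ (erase_ssubset hj)).eq_zero_of_forall_sum_mul_eq_zero hker
  refine ⟨c, fun i hi => ?_⟩
  rcases eq_or_ne i j with rfl | hij
  · exact sub_eq_zero.1 hj0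
  · exact sub_eq_zero.1 (hzero i (mem_erase.2 ⟨hij, hi⟩))

end Matroid

lemma binomialIdeal_le_SEIdeal {E : Type} [DecidableEq E] {L : Submodule ℂ (E → ℂ)}
    {α : Finset E → E → ℂ} : binomialIdeal ℂ E ≤ SEIdeal E L α :=
  Ideal.span_mono Set.subset_union_left

section Thickening

variable {m n : ℕ} {L : Submodule ℂ (Fin n → ℂ)}

lemma Indep.image_snd {S : Finset (Fin m × Fin n)}
    (hS : Indep (Fin m × Fin n) (thickening n m L) S) :
    Indep (Fin n) L (S.image Prod.snd) := by
  intro y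
  obtain ⟨_, ⟨v, hv, rfl⟩, hvy⟩ := hS (y ∘ Prod.snd)
  refine ⟨v, hv, ?_⟩
  simp only [mem_image]
  rintro _ ⟨p, hp, rfl⟩
  exact hvy p hp

lemma IsCircuit.image_snd {K : Finset (Fin m × Fin n)}
    (hK : IsCircuit (Fin m × Fin n) (thickening n m L) K) :
    IsCircuit (Fin n) L (K.image Prod.snd) ∨ Indep (Fin n) L (K.image Prod.snd) := by
  refine or_iff_not_imp_right.2 fun hdep => ⟨hdep, fun K₀ hK₀ => ?_⟩
  have himage : (K.filter (·.2 ∈ K₀)).image Prod.snd = K₀ := by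
    ext j
    simp only [mem_image, mem_filter]
    refine ⟨fun ⟨p, ⟨_, hp⟩, hpj⟩ => hpj ▸ hp, fun hj => ?_⟩
    obtain ⟨p, hp, rfl⟩ := mem_image.1 (hK₀.1 hj)
    exact ⟨p, ⟨hp, hj⟩, rfl⟩
  rw [← himage]
  refine (hK.2 _ ⟨filter_subset _ _, fun hsub => hK₀.2 fun j hj => ?_⟩).image_snd
  obtain ⟨p, hp, rfl⟩ := mem_image.1 hj
  exact (mem_filter.1 (hsub hp)).2

variable {α : Finset (Fin n) → Fin n → ℂ} {α' : Finset (Fin m × Fin n) → Fin m × Fin n → ℂ}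

/-- Summing the coefficients of `f_K^A` over each column gives a relation on `L` supported on
the projection `K₀` of `K`; it vanishes if `K₀` is independent and is a multiple of `α K₀`
if `K₀` is a circuit. -/
lemma sum_C_mul_X_insert_snd_mem (hα : CircuitData (Fin n) L α)
    (hα' : CircuitData (Fin m × Fin n) (thickening n m L) α') {K : Finset (Fin m × Fin n)}
    (hK : IsCircuit (Fin m × Fin n) (thickening n m L) K) {W : Finset (Fin n)}
    (hW : Disjoint W (K.image Prod.snd)) :
    ∑ p ∈ K, C (α' K p) * X (insert p.2 W) ∈ SEIdeal (Fin n) L α := by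
  set δ : Fin n → ℂ := fun j => ∑ p ∈ K with p.2 = j, α' K p
  have hpush : ∑ p ∈ K, C (α' K p) * X (insert p.2 W) =
      ∑ j ∈ K.image Prod.snd, C (δ j) * X (insert j W) := by
    simp only [C_mul']
    exact (sum_image_fiber_smul K Prod.snd _ fun j => (X (insert j W) : MvPolynomial _ ℂ)).symm
  have hδ : ∀ v ∈ L, ∑ j ∈ K.image Prod.snd, δ j * v j = 0 := fun v hv => by
    simp only [δ, ← smul_eq_mul]
    rw [sum_image_fiber_smul]
    exact (hα' K hK).2 _ ⟨v, hv, rfl⟩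
  rw [hpush]
  rcases hK.image_snd with hK₀ | hK₀
  · obtain ⟨c, hc⟩ := hK₀.exists_eq_mul hα hδ
    have hgen : ∑ j ∈ K.image Prod.snd, C (α (K.image Prod.snd) j) * X (insert j W)
        ∈ SEIdeal (Fin n) L α := Ideal.subset_span (Or.inr ⟨_, W, hK₀, hW, rfl⟩)
    convert Ideal.mul_mem_left _ (C c) hgen using 1
    rw [mul_sum]
    exact sum_congr rfl fun j hj => by rw [hc j hj, map_mul, mul_assoc]
  · have hzero := hK₀.eq_zero_of_forall_sum_mul_eq_zero hδ
    rw [sum_eq_zero fun j hj => by rw [hzero j hj, map_zero, zero_mul]]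
    exact zero_mem _

lemma gammaTilde_C (c : ℂ) : gammaTilde m n (C c) = C c :=
  (gammaTilde m n).commutes c

lemma gammaTilde_sum_C_mul_X_insert_mem (hα : CircuitData (Fin n) L α)
    (hα' : CircuitData (Fin m × Fin n) (thickening n m L) α') {K A : Finset (Fin m × Fin n)}
    (hK : IsCircuit (Fin m × Fin n) (thickening n m L) K) (hAK : Disjoint A K) :
    gammaTilde m n (∑ p ∈ K, C (α' K p) * X (insert p A)) ∈ SEIdeal (Fin n) L α := by
  set W := levelSet A m
  set P : MvPolynomial (Finset (Fin n)) ℂ := zProd (lowerLevels A)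
  have hsplit : gammaTilde m n (∑ p ∈ K, C (α' K p) * X (insert p A)) =
      ∑ p ∈ K, C (α' K p) * (gammaTilde m n (X (insert p A)) - X (insert p.2 W) * P) +
        P * ∑ p ∈ K, C (α' K p) * X (insert p.2 W) := by
    simp only [map_sum, map_mul, gammaTilde_C, mul_sum, ← sum_add_distrib]
    exact sum_congr rfl fun p _ => by ring
  have hWK : Disjoint W (K.image Prod.snd) := by
    refine disjoint_right.2 fun j hj hjW => ?_
    obtain ⟨p, hp, rfl⟩ := mem_image.1 hj
    exact (colCount_lt (disjoint_right.1 hAK hp)).not_ge (mem_filter.1 hjW).2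
  rw [hsplit]
  exact add_mem (sum_mem fun p hp => Ideal.mul_mem_left _ _ (binomialIdeal_le_SEIdeal
      (gammaTilde_X_insert_sub_mem (disjoint_right.1 hAK hp))))
    (Ideal.mul_mem_left _ _ (sum_C_mul_X_insert_snd_mem hα hα' hK hWK))

theorem map_gammaTilde_SEIdeal_le (hα : CircuitData (Fin n) L α)
    (hα' : CircuitData (Fin m × Fin n) (thickening n m L) α') :
    (SEIdeal (Fin m × Fin n) (thickening n m L) α').map (gammaTilde m n) ≤
      SEIdeal (Fin n) L α := by
  rw [SEIdeal, Ideal.map_span, Ideal.span_le]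
  rintro _ ⟨g, ⟨S, T, rfl⟩ | ⟨K, A, hK, hAK, rfl⟩, rfl⟩
  · exact binomialIdeal_le_SEIdeal (gammaTilde_binomial_mem S T)
  · exact gammaTilde_sum_C_mul_X_insert_mem hα hα' hK hAK

end Thickening

lemma Multiset.exists_fin_map_eq {β : Type*} {M : Multiset β} {m : ℕ} (hM : M.card = m) :
    ∃ f : Fin m → β, univ.val.map f = M := by
  subst hM
  refine ⟨fun i => M.toList.get (i.cast (by simp)), ?_⟩
  rw [Fin.univ_val_map]
  conv_rhs => rw [← Multiset.coe_toList M]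
  congr 1
  exact List.ext_get (by simp) fun _ _ _ => by simp

lemma zProd_toMultiset {R β : Type*} [CommRing R] (μ : Finset β →₀ ℕ) :
    (zProd (Finsupp.toMultiset μ) : MvPolynomial (Finset β) R) = monomial μ 1 := by
  classical
  rw [zProd, Finsupp.toMultiset_map, Finsupp.prod_toMultiset,
    Finsupp.prod_mapDomain_index (fun _ => pow_zero _) fun _ _ _ => pow_add _ _ _,
    monomial_eq, C_1, one_mul]

section Surjectivity

variable {m n : ℕ}

lemma rowOf_filter (f : Fin m → Finset (Fin n)) :
    rowOf m n (univ.filter fun q => q.2 ∈ f q.1) = f := by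
  ext k x
  simp [mem_rowOf]

lemma exists_gammaTilde_X_eq_monomial {μ : Finset (Fin n) →₀ ℕ} (hμ : μ.degree = m) :
    ∃ S : Finset (Fin m × Fin n), gammaTilde m n (X S) = monomial μ 1 := by
  obtain ⟨f, hf⟩ := Multiset.exists_fin_map_eq (M := Finsupp.toMultiset μ) (m := m)
    (by rw [Finsupp.card_toMultiset, ← hμ]; rfl)
  exact ⟨_, by rw [gammaTilde_X, rowOf_filter, hf, zProd_toMultiset]⟩

theorem exists_isHomogeneous_one_gammaTilde_eq {p : MvPolynomial (Finset (Fin n)) ℂ}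
    (hp : p.IsHomogeneous m) :
    ∃ r, r.IsHomogeneous 1 ∧ gammaTilde m n r = p := by
  have hS : ∀ μ ∈ p.support,
      ∃ S : Finset (Fin m × Fin n), gammaTilde m n (X S) = monomial μ 1 :=
    fun μ hμ => exists_gammaTilde_X_eq_monomial <| by
      rw [Finsupp.degree_eq_weight_one]; exact hp (mem_support_iff.1 hμ)
  choose! S hS using hS
  refine ⟨∑ μ ∈ p.support, C (p.coeff μ) * X (S μ),
    IsHomogeneous.sum _ _ _ fun μ _ => isHomogeneous_C_mul_X _ _, ?_⟩
  conv_rhs => rw [← p.support_sum_monomial_coeff]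
  simp only [map_sum, map_mul, gammaTilde_C]
  exact sum_congr rfl fun μ hμ => by rw [hS μ hμ, C_mul_monomial, mul_one]

end Surjectivity

theorem stmt13_general (n : ℕ) (L : Submodule ℂ (Fin n → ℂ))
    (α : Finset (Fin n) → Fin n → ℂ) (hα : CircuitData (Fin n) L α)
    (m : ℕ)
    (α' : Finset (Fin m × Fin n) → Fin m × Fin n → ℂ)
    (hα' : CircuitData (Fin m × Fin n) (thickening n m L) α') :
    (∀ p ∈ SEIdeal (Fin m × Fin n) (thickening n m L) α',
        p.IsHomogeneous 1 → gammaTilde m n p ∈ SEIdeal (Fin n) L α) ∧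
    (∀ p : MvPolynomial (Finset (Fin n)) ℂ, p.IsHomogeneous m →
        ∃ r : MvPolynomial (Finset (Fin m × Fin n)) ℂ, r.IsHomogeneous 1 ∧
          Ideal.Quotient.mk (SEIdeal (Fin n) L α) (gammaTilde m n r) =
            Ideal.Quotient.mk (SEIdeal (Fin n) L α) p) := by
  refine ⟨fun p hp _ => map_gammaTilde_SEIdeal_le hα hα' (Ideal.mem_map_of_mem _ hp),
    fun p hp => ?_⟩
  obtain ⟨r, hr, hrp⟩ := exists_isHomogeneous_one_gammaTilde_eq hp
  exact ⟨r, hr, by rw [hrp]⟩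

/-- `γ̃` maps the degree-one component of `I_{L(m)}^SE` into `I_L^SE`, and
induces a well-defined surjection `γ : (R_{L(m)})_1 → (R_L)_m`: every degree-`m` element of
`R_L = ℂ[z_S : S ⊆ [n]]/I_L^SE` is the image under `γ̃` of a degree-one polynomial. -/
theorem stmt13 (n d : ℕ) (L : Submodule ℂ (Fin n → ℂ)) (hd : Module.finrank ℂ L = d)
    (α : Finset (Fin n) → Fin n → ℂ) (hα : CircuitData (Fin n) L α)
    (m : ℕ) (hm : 1 ≤ m)
    (α' : Finset (Fin m × Fin n) → Fin m × Fin n → ℂ)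
    (hα' : CircuitData (Fin m × Fin n) (thickening n m L) α') :
    (∀ p ∈ SEIdeal (Fin m × Fin n) (thickening n m L) α',
        p.IsHomogeneous 1 → gammaTilde m n p ∈ SEIdeal (Fin n) L α) ∧
    (∀ p : MvPolynomial (Finset (Fin n)) ℂ, p.IsHomogeneous m →
        ∃ r : MvPolynomial (Finset (Fin m × Fin n)) ℂ, r.IsHomogeneous 1 ∧
          Ideal.Quotient.mk (SEIdeal (Fin n) L α) (gammaTilde m n r) =
            Ideal.Quotient.mk (SEIdeal (Fin n) L α) p) :=
  stmt13_general n L α hα m α' hα'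
end
end

section
/- The degree-1 graded component of R_L = ℂ[z_S : S ⊆ [n]]/I_L^SE has ℂ-dimension equal to the number of independent sets of the matroid M of L, i.e., the number of subsets I ⊆ [n] such that the coordinate projection pr_I maps L onto ℂ^I. -/
open scoped Classical

noncomputable section

/-- The dimension of the degree-`k` graded component of `R_L = ℂ[z_S : S ⊆ E]/I_L^SE`,
realized as the image in the quotient of the degree-`k` homogeneous polynomials. -/
def RLdim (E : Type) [Fintype E] [DecidableEq E] (L : Submodule ℂ (E → ℂ))
    (α : Finset E → E → ℂ) (k : ℕ) : ℕ :=
  Module.finrank ℂ (Submodule.map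
    (Ideal.Quotient.mkₐ ℂ (SEIdeal E L α)).toLinearMap
    (MvPolynomial.homogeneousSubmodule (Finset E) ℂ k))

/-!
In degree one, `R_L` is the space of linear forms in the `z_S` modulo the linear forms lying in
`I_L^SE`. The binomial generators are quadratic, so these are spanned by the `f_C^A`; eliminating
along circuits shows that they are exactly the forms `Σ_i u_i z_{A ∪ {i}}` with `u ⊥ L` supported
off `A`. It remains to see that the span `W` of these forms has dimension equal to the number of
dependent sets.

Read as a linear relation among the squarefree monomials `x^S` restricted to `L`, every element of
`W` holds, so `W` lies inside the space of such relations. Both `#dependent ≤ dim W` and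
`dim (relations) ≤ #dependent` follow by deletion–contraction at an element `e`: split a
coefficient vector according to whether its index sets contain `e`. The part avoiding `e` is
governed by the contraction `L ∩ {x_e = 0}`, the part containing `e`, shifted down, by `L` itself
(or is unconstrained when `e` is a loop). For the upper bound one needs that `x_e · f = 0` on `L`
forces `f = 0` on `L` when `e` is not a loop, since `f` restricted to a line in `L` is a
polynomial with infinitely many roots.
-/

open Finset

theorem Submodule.finrank_map_add_finrank_inf_ker {K V W : Type*} [DivisionRing K]
    [AddCommGroup V] [Module K V] [AddCommGroup W] [Module K W]
    (p : Submodule K V) [FiniteDimensional K p] (f : V →ₗ[K] W) :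
    Module.finrank K (p.map f) + Module.finrank K ↥(p ⊓ LinearMap.ker f) = Module.finrank K p := by
  rw [← LinearMap.range_domRestrict, ← (f.domRestrict p).finrank_range_add_finrank_ker,
    LinearMap.ker_domRestrict, ← Submodule.finrank_map_subtype_eq, Submodule.map_comap_subtype]

namespace MvPolynomial

attribute [local instance] MvPolynomial.gradedAlgebra in
theorem homogeneousComponent_mul_of_isHomogeneous {σ R : Type*} [CommSemiring R]
    {a b : MvPolynomial σ R} {i : ℕ} (hb : b.IsHomogeneous i) (n : ℕ) :
    homogeneousComponent n (a * b) = if i ≤ n then homogeneousComponent (n - i) a * b else 0 := by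
  rw [← decomposition.decompose'_apply, ← decomposition.decompose'_apply]
  exact DirectSum.coe_decompose_mul_of_right_mem (homogeneousSubmodule σ R) n
    ((mem_homogeneousSubmodule i b).mpr hb)

end MvPolynomial

namespace SubspaceMatroid

variable {E : Type}

def supported (G : Finset E) : Submodule ℂ (Finset E → ℂ) :=
  ⨅ S ∈ (↑G.powerset : Set (Finset E))ᶜ, LinearMap.ker (LinearMap.proj S)

lemma mem_supported {G : Finset E} {c : Finset E → ℂ} :
    c ∈ supported G ↔ ∀ S, ¬ S ⊆ G → c S = 0 := by
  simp [supported]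

lemma finrank_supported [Fintype E] (G : Finset E) : Module.finrank ℂ (supported G) = 2 ^ #G := by
  rw [supported, (LinearMap.iInfKerProjEquiv ℂ (fun _ => ℂ) disjoint_compl_right
    (by simp)).finrank_eq, Module.finrank_fintype_fun_eq_card]
  simp only [Finset.coe_sort_coe, Fintype.card_coe, card_powerset]

section Matroid

variable (L : Submodule ℂ (E → ℂ))

def IsLoop (e : E) : Prop := ∀ x ∈ L, x e = 0

-- The contraction by `e`, kept inside `ℂ^E`: the coordinate `e` becomes a loop.
def contract (e : E) : Submodule ℂ (E → ℂ) := L ⊓ LinearMap.ker (LinearMap.proj e)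

variable {L}

lemma mem_contract {e : E} {x : E → ℂ} : x ∈ contract L e ↔ x ∈ L ∧ x e = 0 := by
  simp [contract]

lemma contract_eq_self {e : E} (h : IsLoop L e) : contract L e = L :=
  inf_eq_left.mpr fun x hx => h x hx

lemma exists_mem_apply_eq_one {e : E} (h : ¬ IsLoop L e) : ∃ x ∈ L, x e = 1 := by
  obtain ⟨x, hx, hxe⟩ := not_forall₂.mp h
  exact ⟨(x e)⁻¹ • x, L.smul_mem _ hx, by simp [hxe]⟩

lemma not_indep_of_isLoop {e : E} (h : IsLoop L e) {S : Finset E} (heS : e ∈ S) :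
    ¬ Indep E L S := fun hS => by
  obtain ⟨x, hx, hxS⟩ := hS 1
  simpa [h x hx] using hxS e heS

lemma exists_isCircuit_subset {S : Finset E} (hS : ¬ Indep E L S) : ∃ C ⊆ S, IsCircuit E L C :=
  let ⟨C, hCS, hC⟩ := exists_minimal_le_of_wellFoundedLT (fun T => ¬ Indep E L T) S hS
  ⟨C, hCS, hC.1, fun _ hC' => not_not.mp (hC.not_prop_of_lt hC')⟩

lemma indep_insert_iff [DecidableEq E] {e : E} (h : ¬ IsLoop L e) {T : Finset E} (heT : e ∉ T) :
    Indep E L (insert e T) ↔ Indep E (contract L e) T := by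
  obtain ⟨x', hx', hx'e⟩ := exists_mem_apply_eq_one h
  constructor
  · intro hT y
    obtain ⟨x, hx, hxy⟩ := hT (Function.update y e 0)
    refine ⟨x, mem_contract.mpr ⟨hx, by simpa using hxy e (mem_insert_self e T)⟩, fun i hi => ?_⟩
    rw [hxy i (mem_insert_of_mem hi), Function.update_of_ne (ne_of_mem_of_not_mem hi heT)]
  · intro hT y
    obtain ⟨z, hz, hzy⟩ := hT (y - y e • x')
    rw [mem_contract] at hz
    refine ⟨z + y e • x', L.add_mem hz.1 (L.smul_mem _ hx'), fun i hi => ?_⟩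
    rcases mem_insert.mp hi with rfl | hi
    · simp [hz.2, hx'e]
    · simp [hzy i hi]

variable (L)

def numDependent (G : Finset E) : ℕ := #{S ∈ G.powerset | ¬ Indep E L S}

lemma numDependent_empty : numDependent L ∅ = 0 := by
  have : Indep E L ∅ := fun _ => ⟨0, L.zero_mem, by simp⟩
  simpa [numDependent] using this

variable [DecidableEq E] {L}

lemma numDependent_insert {e : E} {s : Finset E} (he : e ∉ s) :
    numDependent L (insert e s) =
      numDependent L s + #{T ∈ s.powerset | ¬ Indep E L (insert e T)} := by
  simp only [numDependent, card_filter, sum_powerset_insert he]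

lemma numDependent_insert_of_isLoop {e : E} {s : Finset E} (he : e ∉ s) (h : IsLoop L e) :
    numDependent L (insert e s) = numDependent (contract L e) s + 2 ^ #s := by
  rw [numDependent_insert he, contract_eq_self h, filter_true_of_mem, card_powerset]
  exact fun T _ => not_indep_of_isLoop h (mem_insert_self e T)

lemma numDependent_insert_of_not_isLoop {e : E} {s : Finset E} (he : e ∉ s) (h : ¬ IsLoop L e) :
    numDependent L (insert e s) = numDependent (contract L e) s + numDependent L s := by
  rw [numDependent_insert he, add_comm, numDependent]
  congr 2
  refine filter_congr fun T hT => ?_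
  rw [indep_insert_iff h fun heT => he (mem_powerset.mp hT heT)]

end Matroid

section SetFunctions

variable [DecidableEq E]

def toggle (e : E) : Equiv.Perm (Finset E) :=
  Function.Involutive.toPerm (fun S => if e ∈ S then S.erase e else insert e S)
    (fun S => by by_cases h : e ∈ S <;> simp [h])

lemma toggle_of_mem {e : E} {S : Finset E} (h : e ∈ S) : toggle e S = S.erase e := if_pos h

lemma toggle_of_notMem {e : E} {S : Finset E} (h : e ∉ S) : toggle e S = insert e S := if_neg h

lemma toggle_toggle (e : E) (S : Finset E) : toggle e (toggle e S) = S :=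
  (toggle e).symm_apply_apply S

def toggleEquiv (e : E) : (Finset E → ℂ) ≃ₗ[ℂ] (Finset E → ℂ) :=
  LinearEquiv.funCongrLeft ℂ ℂ (toggle e)

lemma toggleEquiv_apply (e : E) (c : Finset E → ℂ) (S : Finset E) :
    toggleEquiv e c S = c (toggle e S) := rfl

lemma toggleEquiv_single (e : E) (T : Finset E) (r : ℂ) :
    toggleEquiv e (Pi.single T r) = Pi.single (toggle e T) r := by
  ext S
  simp only [toggleEquiv_apply, Pi.single_apply]
  exact if_congr ⟨fun h => h ▸ (toggle_toggle e S).symm, fun h => h ▸ toggle_toggle e T⟩ rfl rfl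

def avoid (e : E) : (Finset E → ℂ) →ₗ[ℂ] (Finset E → ℂ) where
  toFun c S := if e ∈ S then 0 else c S
  map_add' a b := by ext S; by_cases h : e ∈ S <;> simp [h]
  map_smul' r a := by ext S; by_cases h : e ∈ S <;> simp [h]

lemma avoid_apply (e : E) (c : Finset E → ℂ) (S : Finset E) :
    avoid e c S = if e ∈ S then 0 else c S := rfl

lemma mem_ker_avoid {e : E} {c : Finset E → ℂ} :
    c ∈ LinearMap.ker (avoid e) ↔ ∀ S, e ∉ S → c S = 0 := by
  simp only [LinearMap.mem_ker, funext_iff, avoid_apply, Pi.zero_apply]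
  exact forall_congr' fun S => by split_ifs with h <;> simp [h]

lemma avoid_single (e : E) (T : Finset E) (r : ℂ) :
    avoid e (Pi.single T r) = if e ∈ T then 0 else Pi.single T r := by
  ext S
  rw [avoid_apply]
  by_cases hS : S = T <;> split_ifs <;> simp_all

lemma avoid_mem_supported {e : E} {s : Finset E} {c : Finset E → ℂ}
    (hc : c ∈ supported (insert e s)) : avoid e c ∈ supported s := by
  rw [mem_supported] at hc ⊢
  intro S hS
  rw [avoid_apply]
  split_ifs with heS
  · rfl
  · exact hc S fun h => hS ((subset_insert_iff_of_notMem heS).mp h)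

lemma toggleEquiv_mem_supported {e : E} {s : Finset E} {c : Finset E → ℂ}
    (hc : c ∈ supported (insert e s)) (hker : c ∈ LinearMap.ker (avoid e)) :
    toggleEquiv e c ∈ supported s := by
  rw [mem_supported] at hc ⊢
  intro S hS
  rw [toggleEquiv_apply]
  by_cases heS : e ∈ S
  · rw [toggle_of_mem heS]
    exact mem_ker_avoid.mp hker _ (notMem_erase e S)
  · rw [toggle_of_notMem heS]
    exact hc _ fun h => hS ((insert_subset_insert_iff heS).mp h)

end SetFunctions

section MonomialRelations

variable [Fintype E]

def monomials (x : E → ℂ) : Finset E → ℂ := fun S => ∏ i ∈ S, x i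

def relations (L : Submodule ℂ (E → ℂ)) : Submodule ℂ (Finset E → ℂ) where
  carrier := {c | ∀ x ∈ L, c ⬝ᵥ monomials x = 0}
  add_mem' ha hb x hx := by simp [add_dotProduct, ha x hx, hb x hx]
  zero_mem' _ _ := zero_dotProduct _
  smul_mem' r c hc x hx := by simp [smul_dotProduct, hc x hx]

def monomialRelations (L : Submodule ℂ (E → ℂ)) (G : Finset E) : Submodule ℂ (Finset E → ℂ) :=
  supported G ⊓ relations L

lemma exists_polynomial_eval_eq (c : Finset E → ℂ) (x y : E → ℂ) :
    ∃ p : Polynomial ℂ, ∀ t, p.eval t = c ⬝ᵥ monomials (x + t • y) := by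
  refine ⟨∑ S, Polynomial.C (c S) *
    ∏ i ∈ S, (Polynomial.C (x i) + Polynomial.C (y i) * Polynomial.X), fun t => ?_⟩
  simp [dotProduct, monomials, Polynomial.eval_finsetSum, Polynomial.eval_prod, mul_comm t]

lemma mem_relations_of_forall_mul_eq_zero {L : Submodule ℂ (E → ℂ)} {e : E} (h : ¬ IsLoop L e)
    {d : Finset E → ℂ} (hd : ∀ x ∈ L, x e * (d ⬝ᵥ monomials x) = 0) : d ∈ relations L := by
  obtain ⟨y, hy, hye⟩ := exists_mem_apply_eq_one h
  intro x hx
  -- on the line `x + t y`, the relation is a polynomial in `t` vanishing wherever `x e + t ≠ 0`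
  obtain ⟨p, hp⟩ := exists_polynomial_eval_eq d x y
  have hroots : {t | t ≠ -x e} ⊆ {t | p.IsRoot t} := fun t ht => by
    have := hd _ (L.add_mem hx (L.smul_mem t hy))
    simp only [Pi.add_apply, Pi.smul_apply, smul_eq_mul, hye, mul_one] at this
    exact (hp t).trans ((mul_eq_zero.mp this).resolve_left fun h0 => ht (by linear_combination h0))
  have hp0 : p = 0 := p.eq_zero_of_infinite_isRoot
    ((Set.finite_singleton (-x e)).infinite_compl.mono hroots)
  simpa [hp0] using (hp 0).symm

variable [DecidableEq E]

lemma dotProduct_monomials_of_mem_ker_avoid {e : E} {c : Finset E → ℂ}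
    (hc : c ∈ LinearMap.ker (avoid e)) (x : E → ℂ) :
    c ⬝ᵥ monomials x = x e * (toggleEquiv e c ⬝ᵥ monomials x) := by
  rw [dotProduct, ← Equiv.sum_comp (toggle e), dotProduct, mul_sum]
  refine sum_congr rfl fun S _ => ?_
  rw [toggleEquiv_apply]
  by_cases heS : e ∈ S
  · simp [toggle_of_mem heS, mem_ker_avoid.mp hc _ (notMem_erase e S)]
  · rw [toggle_of_notMem heS, monomials, monomials, prod_insert heS]
    ring

lemma avoid_mem_relations_contract {L : Submodule ℂ (E → ℂ)} {e : E} {c : Finset E → ℂ}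
    (hc : c ∈ relations L) : avoid e c ∈ relations (contract L e) := by
  intro x hx
  rw [mem_contract] at hx
  rw [← hc x hx.1]
  refine sum_congr rfl fun S _ => ?_
  rw [avoid_apply]
  split_ifs with heS
  · rw [zero_mul, monomials, prod_eq_zero heS hx.2, mul_zero]
  · rfl

lemma toggleEquiv_mem_relations {L : Submodule ℂ (E → ℂ)} {e : E} (h : ¬ IsLoop L e)
    {c : Finset E → ℂ} (hc : c ∈ relations L) (hker : c ∈ LinearMap.ker (avoid e)) :
    toggleEquiv e c ∈ relations L :=
  mem_relations_of_forall_mul_eq_zero h fun x hx => by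
    rw [← dotProduct_monomials_of_mem_ker_avoid hker]
    exact hc x hx

end MonomialRelations

section LinearRelations

variable [Fintype E] [DecidableEq E]

lemma exists_add_single_annihilates {L : Submodule ℂ (E → ℂ)} {e : E} {u : E → ℂ}
    (hu : ∀ x ∈ contract L e, u ⬝ᵥ x = 0) : ∃ t : ℂ, ∀ x ∈ L, (u + Pi.single e t) ⬝ᵥ x = 0 := by
  by_cases h : IsLoop L e
  · exact ⟨0, by simpa [contract_eq_self h] using hu⟩
  obtain ⟨y, hy, hye⟩ := exists_mem_apply_eq_one h
  refine ⟨-(u ⬝ᵥ y), fun x hx => ?_⟩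
  have hxy := hu (x - x e • y) (mem_contract.mpr ⟨L.sub_mem hx (L.smul_mem _ hy), by simp [hye]⟩)
  simp only [dotProduct_sub, dotProduct_smul, smul_eq_mul] at hxy
  rw [add_dotProduct, single_dotProduct]
  linear_combination hxy

-- The coefficient vector of the linear form `Σ_i u_i z_{A ∪ {i}}`, which is `f_C^A` when `u`
-- is the vector of circuit coefficients of `C`.
def insertForm (A : Finset E) : (E → ℂ) →ₗ[ℂ] (Finset E → ℂ) :=
  ∑ i, LinearMap.single ℂ (fun _ => ℂ) (insert i A) ∘ₗ LinearMap.proj i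

lemma insertForm_apply (A : Finset E) (u : E → ℂ) :
    insertForm A u = ∑ i, Pi.single (insert i A) (u i) := by
  simp [insertForm]

lemma insertForm_single (A : Finset E) (e : E) (t : ℂ) :
    insertForm A (Pi.single e t) = Pi.single (insert e A) t := by
  rw [insertForm_apply, sum_eq_single e (fun i _ hi => by simp [hi]) (by simp)]
  simp

def linearRelations (L : Submodule ℂ (E → ℂ)) (G : Finset E) : Submodule ℂ (Finset E → ℂ) :=
  Submodule.span ℂ {w | ∃ A u, A ⊆ G ∧ (∀ i, u i ≠ 0 → i ∈ G \ A) ∧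
    (∀ x ∈ L, u ⬝ᵥ x = 0) ∧ w = insertForm A u}

variable {L : Submodule ℂ (E → ℂ)} {G A : Finset E} {u : E → ℂ}

lemma insertForm_mem_linearRelations (hA : A ⊆ G) (hu : ∀ i, u i ≠ 0 → i ∈ G \ A)
    (hL : ∀ x ∈ L, u ⬝ᵥ x = 0) : insertForm A u ∈ linearRelations L G :=
  Submodule.subset_span ⟨A, u, hA, hu, hL, rfl⟩

lemma insertForm_mem_monomialRelations (hA : A ⊆ G) (hu : ∀ i, u i ≠ 0 → i ∈ G \ A)
    (hL : ∀ x ∈ L, u ⬝ᵥ x = 0) : insertForm A u ∈ monomialRelations L G := by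
  refine ⟨mem_supported.mpr fun S hS => ?_, fun x hx => ?_⟩
  · rw [insertForm_apply, Finset.sum_apply]
    refine sum_eq_zero fun i _ => ?_
    by_cases hi : u i = 0
    · simp [hi]
    · have hiG := mem_sdiff.mp (hu i hi)
      exact Pi.single_eq_of_ne (fun h : S = insert i A => hS (h ▸ insert_subset hiG.1 hA)) _
  · have hterm : ∀ i, u i * monomials x (insert i A) = u i * x i * monomials x A := fun i => by
      by_cases hi : u i = 0
      · simp [hi]
      · rw [monomials, monomials, prod_insert (mem_sdiff.mp (hu i hi)).2]
        ring
    simp only [insertForm_apply, sum_dotProduct, single_dotProduct, hterm, ← sum_mul]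
    rw [← dotProduct, hL x hx, zero_mul]

lemma linearRelations_le_monomialRelations : linearRelations L G ≤ monomialRelations L G :=
  Submodule.span_le.mpr fun _ ⟨_, _, hA, hu, hL, hw⟩ =>
    hw ▸ insertForm_mem_monomialRelations hA hu hL

lemma monomialRelations_empty : monomialRelations L ∅ = ⊥ := by
  refine eq_bot_iff.mpr fun c ⟨hsupp, hrel⟩ => funext fun S => ?_
  have hc : ∀ T, T ≠ ∅ → c T = 0 := fun T hT =>
    mem_supported.mp hsupp T fun h => hT (subset_empty.mp h)
  by_cases hS : S = ∅
  · have h0 := hrel 0 L.zero_mem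
    rw [dotProduct, sum_eq_single ∅ (fun T _ hT => by rw [hc T hT, zero_mul]) (by simp)] at h0
    simpa [hS, monomials] using h0
  · exact hc S hS

theorem finrank_monomialRelations_le (L : Submodule ℂ (E → ℂ)) (G : Finset E) :
    Module.finrank ℂ (monomialRelations L G) ≤ numDependent L G := by
  induction G using Finset.induction_on generalizing L with
  | empty => rw [monomialRelations_empty]; simp
  | @insert e s he ih =>
    set R := monomialRelations L (insert e s)
    have himage : Module.finrank ℂ (R.map (avoid e)) ≤ numDependent (contract L e) s := by
      refine (Submodule.finrank_mono ?_).trans (ih _)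
      rintro _ ⟨c, ⟨hs, hr⟩, rfl⟩
      exact ⟨avoid_mem_supported hs, avoid_mem_relations_contract hr⟩
    have hkernel : ∀ Q : Submodule ℂ (Finset E → ℂ),
        (∀ c ∈ R ⊓ LinearMap.ker (avoid e), toggleEquiv e c ∈ Q) →
        Module.finrank ℂ ↥(R ⊓ LinearMap.ker (avoid e)) ≤ Module.finrank ℂ Q := fun Q hQ => by
      rw [← LinearEquiv.finrank_map_eq (toggleEquiv e)]
      exact Submodule.finrank_mono (Submodule.map_le_iff_le_comap.mpr hQ)
    rw [← Submodule.finrank_map_add_finrank_inf_ker R (avoid e)]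
    by_cases hloop : IsLoop L e
    · rw [numDependent_insert_of_isLoop he hloop, ← finrank_supported s]
      exact add_le_add himage (hkernel _ fun c ⟨⟨hs, _⟩, hk⟩ => toggleEquiv_mem_supported hs hk)
    · rw [numDependent_insert_of_not_isLoop he hloop]
      refine add_le_add himage ((hkernel (monomialRelations L s) ?_).trans (ih L))
      exact fun c ⟨⟨hs, hr⟩, hk⟩ =>
        ⟨toggleEquiv_mem_supported hs hk, toggleEquiv_mem_relations hloop hr hk⟩

lemma toggleEquiv_insertForm {e : E} (heA : e ∉ A) (hue : u e = 0) :
    toggleEquiv e (insertForm A u) = insertForm (insert e A) u := by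
  simp only [insertForm_apply, map_sum, toggleEquiv_single]
  refine sum_congr rfl fun i _ => ?_
  by_cases hie : i = e
  · simp [hie, hue]
  · rw [toggle_of_notMem (by simp [Ne.symm hie, heA]), insert_comm]

lemma avoid_insertForm_insert (e : E) (A : Finset E) (u : E → ℂ) :
    avoid e (insertForm (insert e A) u) = 0 := by
  simp [insertForm_apply, map_sum, avoid_single]

lemma avoid_insertForm {e : E} (heA : e ∉ A) (hue : u e = 0) :
    avoid e (insertForm A u) = insertForm A u := by
  simp only [insertForm_apply, map_sum, avoid_single]
  refine sum_congr rfl fun i _ => ?_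
  by_cases hie : i = e
  · simp [hie, hue]
  · simp [Ne.symm hie, heA]

lemma map_toggleEquiv_linearRelations_le {e : E} {s : Finset E} (he : e ∉ s) :
    (linearRelations L s).map (toggleEquiv e).toLinearMap ≤
      linearRelations L (insert e s) ⊓ LinearMap.ker (avoid e) := by
  refine (Submodule.map_span_le _ _ _).mpr ?_
  rintro _ ⟨A, u, hA, hu, hL, rfl⟩
  have hue : u e = 0 := by_contra fun h => he (mem_sdiff.mp (hu e h)).1
  have heA : e ∉ A := fun h => he (hA h)
  rw [LinearEquiv.coe_coe, toggleEquiv_insertForm heA hue]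
  refine ⟨insertForm_mem_linearRelations (insert_subset_insert e hA) (fun i hi => ?_) hL,
    avoid_insertForm_insert e A u⟩
  have hi' := mem_sdiff.mp (hu i hi)
  simp [hi'.1, hi'.2, ne_of_mem_of_not_mem hi'.1 he]

lemma linearRelations_contract_le_map {e : E} {s : Finset E} (he : e ∉ s) :
    linearRelations (contract L e) s ≤ (linearRelations L (insert e s)).map (avoid e) := by
  refine Submodule.span_le.mpr ?_
  rintro _ ⟨A, u, hA, hu, hL, rfl⟩
  have hue : u e = 0 := by_contra fun h => he (mem_sdiff.mp (hu e h)).1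
  have heA : e ∉ A := fun h => he (hA h)
  obtain ⟨t, ht⟩ := exists_add_single_annihilates hL
  refine ⟨insertForm A (u + Pi.single e t), insertForm_mem_linearRelations
    (hA.trans (subset_insert e s)) (fun i hi => ?_) ht, ?_⟩
  · by_cases hie : i = e
    · simp [hie, heA]
    · have hi' := mem_sdiff.mp (hu i (by simpa [hie] using hi))
      simp [hi'.1, hi'.2]
  · rw [map_add, insertForm_single, map_add, avoid_insertForm heA hue, avoid_single,
      if_pos (mem_insert_self e A), add_zero]

lemma map_toggleEquiv_supported_le {e : E} {s : Finset E} (he : e ∉ s) (hloop : IsLoop L e) :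
    (supported s).map (toggleEquiv e).toLinearMap ≤
      linearRelations L (insert e s) ⊓ LinearMap.ker (avoid e) := by
  rintro _ ⟨c, hc, rfl⟩
  rw [← Finset.univ_sum_single c, map_sum]
  refine Submodule.sum_mem _ fun T _ => ?_
  by_cases hT : T ⊆ s
  · have heT : e ∉ T := fun h => he (hT h)
    rw [LinearEquiv.coe_coe, toggleEquiv_single, toggle_of_notMem heT]
    refine ⟨?_, by simp [avoid_single]⟩
    rw [← insertForm_single]
    refine insertForm_mem_linearRelations (hT.trans (subset_insert e s)) (fun i hi => ?_)
      fun x hx => by simp [hloop x hx]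
    obtain rfl : i = e := by by_contra h; simp [h] at hi
    simp [heT]
  · simp [mem_supported.mp hc T hT]

theorem numDependent_le_finrank_linearRelations (L : Submodule ℂ (E → ℂ)) (G : Finset E) :
    numDependent L G ≤ Module.finrank ℂ (linearRelations L G) := by
  induction G using Finset.induction_on generalizing L with
  | empty => simp [numDependent_empty]
  | @insert e s he ih =>
    set W := linearRelations L (insert e s)
    have himage : numDependent (contract L e) s ≤ Module.finrank ℂ (W.map (avoid e)) :=
      (ih _).trans (Submodule.finrank_mono (linearRelations_contract_le_map he))
    rw [← Submodule.finrank_map_add_finrank_inf_ker W (avoid e)]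
    by_cases hloop : IsLoop L e
    · rw [numDependent_insert_of_isLoop he hloop, ← finrank_supported s,
        ← LinearEquiv.finrank_map_eq (toggleEquiv e)]
      exact add_le_add himage (Submodule.finrank_mono (map_toggleEquiv_supported_le he hloop))
    · rw [numDependent_insert_of_not_isLoop he hloop]
      refine add_le_add himage ((ih L).trans ?_)
      rw [← LinearEquiv.finrank_map_eq (toggleEquiv e)]
      exact Submodule.finrank_mono (map_toggleEquiv_linearRelations_le he)

theorem finrank_linearRelations_univ (L : Submodule ℂ (E → ℂ)) :
    Module.finrank ℂ (linearRelations L univ) = numDependent L univ :=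
  le_antisymm
    ((Submodule.finrank_mono linearRelations_le_monomialRelations).trans
      (finrank_monomialRelations_le L univ))
    (numDependent_le_finrank_linearRelations L univ)

end LinearRelations

section Circuits

variable [Fintype E] {L : Submodule ℂ (E → ℂ)}

lemma not_indep_support {u : E → ℂ} (hu : ∀ x ∈ L, u ⬝ᵥ x = 0) (hu0 : u ≠ 0) :
    ¬ Indep E L {i | u i ≠ 0} := fun h => by
  obtain ⟨j, hj⟩ := Function.ne_iff.mp hu0
  obtain ⟨x, hx, hxj⟩ := h (Pi.single j 1)
  have hux : u ⬝ᵥ x = u ⬝ᵥ Pi.single j 1 := sum_congr rfl fun i _ => by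
    by_cases hi : u i = 0
    · simp [hi]
    · rw [hxj i (by simp [hi])]
  rw [hu x hx, dotProduct_single, mul_one] at hux
  exact hj hux.symm

variable (α : Finset E → E → ℂ)

def circuitVector (C : Finset E) : E → ℂ := fun i => if i ∈ C then α C i else 0

variable {α}

lemma circuitVector_annihilates (hα : CircuitData E L α) {C : Finset E} (hC : IsCircuit E L C) :
    ∀ x ∈ L, circuitVector α C ⬝ᵥ x = 0 := fun x hx => by
  simpa [dotProduct, circuitVector, ite_mul, sum_ite_mem] using (hα C hC).2 x hx

lemma mem_span_circuitVector (hα : CircuitData E L α) {D : Finset E} {u : E → ℂ}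
    (hu : ∀ x ∈ L, u ⬝ᵥ x = 0) (hD : ∀ i, u i ≠ 0 → i ∈ D) :
    u ∈ Submodule.span ℂ {v | ∃ C, IsCircuit E L C ∧ C ⊆ D ∧ v = circuitVector α C} := by
  induction h : #{i | u i ≠ 0} using Nat.strong_induction_on generalizing u with
  | _ k ih =>
  by_cases hu0 : u = 0
  · exact hu0 ▸ Submodule.zero_mem _
  obtain ⟨C, hCu, hC⟩ := exists_isCircuit_subset (not_indep_support hu hu0)
  obtain ⟨j, hjC, hαj⟩ := (hα C hC).1
  have hCu' : ∀ i ∈ C, u i ≠ 0 := fun i hi => by simpa using hCu hi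
  set u' := u - (u j / α C j) • circuitVector α C
  have hsupp : ∀ i, u' i ≠ 0 → u i ≠ 0 := fun i hi hui => hi <| by
    have hiC : i ∉ C := fun hiC => hCu' i hiC hui
    simp [u', hui, circuitVector, hiC]
  have hu'j : u' j = 0 := by simp [u', circuitVector, hjC, div_mul_cancel₀ _ hαj]
  have hlt : #{i | u' i ≠ 0} < k := h ▸ card_lt_card ⟨fun i => by simpa using hsupp i,
    fun hsub => (by simpa using hsub (by simpa using hCu' j hjC) : u' j ≠ 0) hu'j⟩
  have hu' : ∀ x ∈ L, u' ⬝ᵥ x = 0 := fun x hx => by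
    simp [u', sub_dotProduct, hu x hx, circuitVector_annihilates hα hC x hx]
  have hmem := ih _ hlt hu' (fun i hi => hD i (hsupp i hi)) rfl
  rw [show u = u' + (u j / α C j) • circuitVector α C by simp [u']]
  exact Submodule.add_mem _ hmem (Submodule.smul_mem _ _ (Submodule.subset_span
    ⟨C, hC, fun i hi => hD i (hCu' i hi), rfl⟩))

variable [DecidableEq E] (L α)

def circuitForms : Submodule ℂ (Finset E → ℂ) :=
  Submodule.span ℂ
    {w | ∃ C A, IsCircuit E L C ∧ Disjoint A C ∧ w = insertForm A (circuitVector α C)}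

variable {L α}

theorem circuitForms_eq_linearRelations (hα : CircuitData E L α) :
    circuitForms L α = linearRelations L univ := by
  apply le_antisymm
  · refine Submodule.span_le.mpr ?_
    rintro _ ⟨C, A, hC, hAC, rfl⟩
    refine insertForm_mem_linearRelations (subset_univ A) (fun i hi => ?_)
      (circuitVector_annihilates hα hC)
    have hiC : i ∈ C := by by_contra h; simp [circuitVector, h] at hi
    simpa using disjoint_right.mp hAC hiC
  · refine Submodule.span_le.mpr ?_
    rintro _ ⟨A, u, -, hu, hL, rfl⟩
    refine Submodule.span_le.mpr ?_ (Submodule.apply_mem_span_image_of_mem_span (insertForm A)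
      (mem_span_circuitVector hα hL hu))
    rintro _ ⟨_, ⟨C, hC, hCA, rfl⟩, rfl⟩
    exact Submodule.subset_span
      ⟨C, A, hC, disjoint_right.mpr fun i hi => (mem_sdiff.mp (hCA hi)).2, rfl⟩

end Circuits

section DegreeOne

open MvPolynomial

variable [Fintype E]

def toLinearForm : (Finset E → ℂ) →ₗ[ℂ] MvPolynomial (Finset E) ℂ :=
  Fintype.linearCombination ℂ X

lemma toLinearForm_injective : Function.Injective (toLinearForm (E := E)) :=
  linearIndependent_iff_injective_fintypeLinearCombination.mp (linearIndependent_X _ _)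

lemma range_toLinearForm :
    LinearMap.range (toLinearForm (E := E)) = homogeneousSubmodule (Finset E) ℂ 1 := by
  rw [toLinearForm, Fintype.range_linearCombination, homogeneousSubmodule_one_eq_span_X]

lemma isHomogeneous_toLinearForm (c : Finset E → ℂ) : (toLinearForm c).IsHomogeneous 1 := by
  rw [← mem_homogeneousSubmodule, ← range_toLinearForm]
  exact LinearMap.mem_range_self _ _

variable [DecidableEq E] {L : Submodule ℂ (E → ℂ)} {α : Finset E → E → ℂ}

lemma toLinearForm_insertForm_circuitVector (K A : Finset E) :
    toLinearForm (insertForm A (circuitVector α K)) =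
      ∑ i ∈ K, MvPolynomial.C (α K i) * X (insert i A) := by
  simp [insertForm_apply, map_sum, toLinearForm, circuitVector, smul_eq_C_mul, sum_ite_mem]

lemma homogeneousComponent_one_mul_mem_map_circuitForms (q : MvPolynomial (Finset E) ℂ)
    {p : MvPolynomial (Finset E) ℂ} (hp : p ∈ SEIdeal E L α) :
    homogeneousComponent 1 (q * p) ∈ (circuitForms L α).map toLinearForm := by
  -- quantifying over the multiplier `q` makes the claim stable under the ideal's scalar action
  induction hp using Submodule.span_induction generalizing q with
  | mem g hg =>
    rcases hg with ⟨S, T, rfl⟩ | ⟨K, A, hK, hAK, rfl⟩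
    · have hquad := ((isHomogeneous_X ℂ S).mul (isHomogeneous_X ℂ T)).sub
        ((isHomogeneous_X ℂ (S ∪ T)).mul (isHomogeneous_X ℂ (S ∩ T)))
      rw [homogeneousComponent_mul_of_isHomogeneous hquad, if_neg (by norm_num)]
      exact Submodule.zero_mem _
    · rw [← toLinearForm_insertForm_circuitVector,
        homogeneousComponent_mul_of_isHomogeneous (isHomogeneous_toLinearForm _), if_pos le_rfl,
        homogeneousComponent_zero, ← smul_eq_C_mul, ← map_smul]
      exact Submodule.mem_map_of_mem (Submodule.smul_mem _ _
        (Submodule.subset_span ⟨K, A, hK, hAK, rfl⟩))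
  | zero => simp
  | add x y _ _ hx hy => simpa [mul_add] using Submodule.add_mem _ (hx q) (hy q)
  | smul r x _ hx => simpa [mul_assoc] using hx (q * r)

lemma toLinearForm_mem_SEIdeal_iff {c : Finset E → ℂ} :
    toLinearForm c ∈ SEIdeal E L α ↔ c ∈ circuitForms L α := by
  constructor
  · intro hc
    have := homogeneousComponent_one_mul_mem_map_circuitForms 1 hc
    rw [one_mul, homogeneousComponent_eq_self (isHomogeneous_toLinearForm c)] at this
    obtain ⟨c', hc', hcc'⟩ := this
    exact toLinearForm_injective hcc' ▸ hc'
  · intro hc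
    refine (Submodule.span_le (p := ((SEIdeal E L α).restrictScalars ℂ).comap toLinearForm)).mpr
      ?_ hc
    rintro _ ⟨K, A, hK, hAK, rfl⟩
    exact Ideal.subset_span (Or.inr ⟨K, A, hK, hAK, toLinearForm_insertForm_circuitVector K A⟩)

theorem RLdim_one (hα : CircuitData E L α) :
    RLdim E L α 1 = #{I : Finset E | Indep E L I} := by
  set φ := (Ideal.Quotient.mkₐ ℂ (SEIdeal E L α)).toLinearMap ∘ₗ toLinearForm
  have hrange : RLdim E L α 1 = Module.finrank ℂ (LinearMap.range φ) := by
    rw [RLdim, ← range_toLinearForm, LinearMap.range_comp]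
  have hker : LinearMap.ker φ = linearRelations L univ := by
    ext c
    simp [φ, Ideal.Quotient.eq_zero_iff_mem, toLinearForm_mem_SEIdeal_iff,
      circuitForms_eq_linearRelations hα]
  have hcount : numDependent L univ + #{I : Finset E | Indep E L I} = 2 ^ Fintype.card E := by
    rw [numDependent, powerset_univ, add_comm, card_filter_add_card_filter_not, card_univ,
      Fintype.card_finset]
  have hrank := φ.finrank_range_add_finrank_ker
  rw [hker, finrank_linearRelations_univ, Module.finrank_fintype_fun_eq_card,
    Fintype.card_finset] at hrank
  omega

end DegreeOne

end SubspaceMatroid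

theorem stmt14_general (n : ℕ) (L : Submodule ℂ (Fin n → ℂ))
    (α : Finset (Fin n) → Fin n → ℂ) (hα : CircuitData (Fin n) L α) :
    RLdim (Fin n) L α 1 =
      (Finset.univ.filter (fun I : Finset (Fin n) => Indep (Fin n) L I)).card :=
  SubspaceMatroid.RLdim_one hα

/-- `dim_ℂ (R_L)_1` equals the number of independent sets of `M`. -/
theorem stmt14 (n d : ℕ) (L : Submodule ℂ (Fin n → ℂ)) (hd : Module.finrank ℂ L = d)
    (α : Finset (Fin n) → Fin n → ℂ) (hα : CircuitData (Fin n) L α) :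
    RLdim (Fin n) L α 1 =
      (Finset.univ.filter (fun I : Finset (Fin n) => Indep (Fin n) L I)).card :=
  stmt14_general n L α hα
end
end
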